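/- arXiv:1906.05877 — 6 statements merged into one kernel-verified Lean document; each statement's English description precedes it below -/
import Mathlib

section
/- Let n ≥ 1 and s ≥ 1 be integers, and suppose there exists an off-diagonal solution (x_1, ..., x_{2s}) of the Vinogradov system of degree n in 2s variables with positive integer entries. Then there exist a constant c > 0 and an integer X_0 such that for every integer X ≥ X_0, the number of off-diagonal solutions of the system with all entries in {1, ..., X} is at least c·X^2. -/
open Finset

private lemma power_sum_shift {s n : ℕ} (x y : Fin s → ℕ)
    (heq : ∀ j ∈ Finset.Icc 1 n, ∑ i, (x i) ^ j = ∑ i, (y i) ^ j)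
    (j : ℕ) (hj : j ≤ n) (l t : ℕ) :
    ∑ i, (l * x i + t) ^ j = ∑ i, (l * y i + t) ^ j := by
  have expand : ∀ z : Fin s → ℕ,
      ∑ i, (l * z i + t) ^ j
        = ∑ k ∈ Finset.range (j + 1),
            (∑ i, z i ^ k) * (l ^ k * t ^ (j - k) * j.choose k) := by
    intro z
    simp_rw [add_pow, mul_pow, Finset.sum_mul]
    rw [Finset.sum_comm]
    exact Finset.sum_congr rfl fun k _ => Finset.sum_congr rfl fun i _ => by push_cast; ring
  rw [expand, expand]
  refine Finset.sum_congr rfl fun k hk => ?_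
  rcases Nat.eq_zero_or_pos k with h | h
  · subst h; simp
  · rw [heq k (Finset.mem_Icc.mpr
      ⟨h, (Nat.lt_succ_iff.mp (Finset.mem_range.mp hk)).trans hj⟩)]

/-- One off-diagonal solution of the Vinogradov system generates `≳ X²`
off-diagonal solutions with entries in `{1,…,X}` (Lemma 2.2). -/
theorem off_diagonal_solutions_generate (n s : ℕ) (hn : 1 ≤ n) (hs : 1 ≤ s)
    (hex : ∃ x y : Fin s → ℕ, (∀ i, 0 < x i) ∧ (∀ i, 0 < y i) ∧
      (∀ j ∈ Finset.Icc 1 n, ∑ i, (x i) ^ j = ∑ i, (y i) ^ j) ∧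
      ¬ ∃ σ : Equiv.Perm (Fin s), ∀ i, x (σ i) = y i) :
    ∃ c : ℝ, 0 < c ∧ ∃ X₀ : ℕ, ∀ X : ℕ, X₀ ≤ X →
      c * (X : ℝ) ^ 2 ≤
        ((((Fintype.piFinset fun _ : Fin s => Finset.Icc 1 X) ×ˢ
            (Fintype.piFinset fun _ : Fin s => Finset.Icc 1 X)).filter
          (fun z => (∀ j ∈ Finset.Icc 1 n, ∑ i, (z.1 i) ^ j = ∑ i, (z.2 i) ^ j) ∧
            ¬ ∃ σ : Equiv.Perm (Fin s), ∀ i, z.1 (σ i) = z.2 i)).card : ℝ) := by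
  obtain ⟨x, y, hx, hy, heq, hoff⟩ := hex
  have i0 : Fin s := ⟨0, hs⟩
  set M : ℕ := (Finset.univ.sup fun i => max (x i) (y i)) + 1 with hM
  have hM0 : 0 < M := Nat.succ_pos _
  have hsup : ∀ i, max (x i) (y i) ≤ Finset.univ.sup fun i => max (x i) (y i) :=
    fun i => Finset.le_sup (f := fun i => max (x i) (y i)) (Finset.mem_univ i)
  have hxM : ∀ i, x i ≤ M := fun i => by have := hsup i; omega
  have hyM : ∀ i, y i ≤ M := fun i => by have := hsup i; omega
  refine ⟨1 / (8 * M), by positivity, 4 * M, fun X hX => ?_⟩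
  set a : ℕ := X / (2 * M) with ha
  set b : ℕ := X / 2 + 1 with hb
  set T := (((Fintype.piFinset fun _ : Fin s => Finset.Icc 1 X) ×ˢ
            (Fintype.piFinset fun _ : Fin s => Finset.Icc 1 X)).filter
          (fun z => (∀ j ∈ Finset.Icc 1 n, ∑ i, (z.1 i) ^ j = ∑ i, (z.2 i) ^ j) ∧
            ¬ ∃ σ : Equiv.Perm (Fin s), ∀ i, z.1 (σ i) = z.2 i)) with hT
  have haM : a * M ≤ X / 2 := by
    have h1 : a = X / 2 / M := by rw [Nat.div_div_eq_div_mul]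
    rw [h1]
    exact Nat.div_mul_le_self _ _
  -- the injection
  have hmaps : ∀ p ∈ Finset.range a ×ˢ Finset.range b,
      ((fun i => (p.1 + 1) * x i + p.2 : Fin s → ℕ),
       (fun i => (p.1 + 1) * y i + p.2 : Fin s → ℕ)) ∈ T := by
    intro p hp
    rw [Finset.mem_product, Finset.mem_range, Finset.mem_range] at hp
    have hp1 : p.1 + 1 ≤ a := hp.1
    have hp2 : p.2 ≤ X / 2 := by omega
    have hentry : ∀ z : Fin s → ℕ, (∀ i, 0 < z i) → (∀ i, z i ≤ M) →
        ∀ i, (p.1 + 1) * z i + p.2 ∈ Finset.Icc 1 X := by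
      intro z hz hzM i
      rw [Finset.mem_Icc]
      constructor
      · have : 1 ≤ (p.1 + 1) * z i := Nat.one_le_iff_ne_zero.mpr (by
          have := hz i; positivity)
        omega
      · calc (p.1 + 1) * z i + p.2 ≤ a * M + (X / 2) :=
              Nat.add_le_add (Nat.mul_le_mul hp1 (hzM i)) hp2
          _ ≤ X / 2 + X / 2 := Nat.add_le_add_right haM _
          _ ≤ X := by omega
    rw [hT, Finset.mem_filter]
    refine ⟨Finset.mem_product.mpr ⟨?_, ?_⟩, ?_, ?_⟩
    · exact Fintype.mem_piFinset.mpr (hentry x hx hxM)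
    · exact Fintype.mem_piFinset.mpr (hentry y hy hyM)
    · intro j hj
      exact power_sum_shift x y heq j (Finset.mem_Icc.mp hj).2 (p.1 + 1) p.2
    · rintro ⟨σ, hσ⟩
      refine hoff ⟨σ, fun i => ?_⟩
      have h := hσ i
      simp only at h
      have h' : (p.1 + 1) * x (σ i) = (p.1 + 1) * y i := by omega
      exact Nat.eq_of_mul_eq_mul_left (by omega) h'
  have hinj : Set.InjOn
      (fun p : ℕ × ℕ => ((fun i => (p.1 + 1) * x i + p.2 : Fin s → ℕ),
       (fun i => (p.1 + 1) * y i + p.2 : Fin s → ℕ)))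
      ((Finset.range a ×ˢ Finset.range b : Finset (ℕ × ℕ)) : Set (ℕ × ℕ)) := by
    intro p _ q _ hpq
    simp only [Prod.mk.injEq] at hpq
    have h1 : ∀ i, (p.1 + 1) * x i + p.2 = (q.1 + 1) * x i + q.2 :=
      fun i => congrFun hpq.1 i
    have h2 : ∀ i, (p.1 + 1) * y i + p.2 = (q.1 + 1) * y i + q.2 :=
      fun i => congrFun hpq.2 i
    by_cases hfst : p.1 = q.1
    · have := h1 i0
      rw [hfst] at this
      have hsnd : p.2 = q.2 := by omega
      exact Prod.ext hfst hsnd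
    · exfalso
      have hxy : ∀ i, x i = y i := by
        intro i
        have hx' : ((p.1 : ℤ) - q.1) * x i = (q.2 : ℤ) - p.2 := by
          have h1' : ((p.1 : ℤ) + 1) * x i + p.2 = ((q.1 : ℤ) + 1) * x i + q.2 := by
            exact_mod_cast h1 i
          ring_nf at h1' ⊢
          linarith
        have hy' : ((p.1 : ℤ) - q.1) * y i = (q.2 : ℤ) - p.2 := by
          have h2' : ((p.1 : ℤ) + 1) * y i + p.2 = ((q.1 : ℤ) + 1) * y i + q.2 := by
            exact_mod_cast h2 i
          ring_nf at h2' ⊢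
          linarith
        have hne : ((p.1 : ℤ) - q.1) ≠ 0 := by
          intro h
          exact hfst (by exact_mod_cast sub_eq_zero.mp h)
        exact_mod_cast mul_left_cancel₀ hne (hx'.trans hy'.symm)
      exact hoff ⟨Equiv.refl _, fun i => by simpa using hxy i⟩
  have hcard : a * b ≤ T.card := by
    have := Finset.card_le_card_of_injOn _ hmaps hinj
    simpa using this
  -- the real estimate
  have hMre : (0 : ℝ) < M := by exact_mod_cast hM0
  have hXre : (4 : ℝ) * M ≤ X := by exact_mod_cast hX
  have hdm := Nat.div_add_mod X (2 * M)
  have hmod : X % (2 * M) < 2 * M := Nat.mod_lt _ (by omega)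
  have hA : (X : ℝ) ≤ 2 * M * a + 2 * M := by
    have : (2 * M * a + X % (2 * M) : ℕ) = X := hdm
    have h' : (2 * (M : ℝ) * a + (X % (2 * M) : ℕ) : ℝ) = X := by exact_mod_cast this
    have h'' : ((X % (2 * M) : ℕ) : ℝ) ≤ 2 * M := by exact_mod_cast hmod.le
    linarith
  have hB : (X : ℝ) ≤ 2 * b := by
    have : X ≤ 2 * b := by omega
    exact_mod_cast this
  have hab : 1 / (8 * (M : ℝ)) * X ^ 2 ≤ (a : ℝ) * b := by
    rw [div_mul_eq_mul_div, div_le_iff₀ (by positivity)]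
    have hA' : (X : ℝ) / 2 ≤ 2 * M * a := by linarith
    have hp : ((X : ℝ) / 2) * X ≤ (2 * M * a) * (2 * b) := by
      have h0 : (0 : ℝ) ≤ (X : ℝ) / 2 := by positivity
      have h1 : (0 : ℝ) ≤ 2 * (M : ℝ) * a := by positivity
      exact mul_le_mul hA' hB (by positivity) h1
    nlinarith
  calc (1 / (8 * (M : ℝ))) * X ^ 2 ≤ (a : ℝ) * b := hab
    _ = ((a * b : ℕ) : ℝ) := by push_cast; ring
    _ ≤ T.card := by exact_mod_cast hcard
end

section
/- Let p ∈ (1,∞), C ∈ (0,∞), and N ≥ 1 an integer. Let T: ℂ^N → [0,∞) be a function satisfying T(a+b) ≤ T(a) + T(b) for all a, b ∈ ℂ^N and T(λ·a) = |λ|·T(a) for all λ ∈ ℂ and a ∈ ℂ^N. Suppose that T(1_S) ≤ C·‖1_S‖_{ℓ^p} holds for every subset S ⊆ {1,...,N}, where 1_S denotes the indicator vector of S. Then for every a ∈ ℂ^N, T(a) ≤ 2^{1/p}·4^{1/p'}·C·(1 + p^{-1}(log N)^{1/p'})·‖a‖_{ℓ^p}. -/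
/-!
Let `b ≥ 0` have decreasing rearrangement `b*₀ ≥ b*₁ ≥ ⋯ ≥ b*_{N-1}`. Then `b` is the sum of
the layers `(b*ₖ - b*ₖ₊₁) 1_{Sₖ₊₁}`, where `Sₖ₊₁` indexes the `k + 1` largest entries, so the
restricted bound and Abel summation give `T b ≤ C ∑ₖ b*ₖ ((k+1)^{1/p} - k^{1/p})`. The weight at `k = 0` is `1`; for
`k ≥ 1`, writing `(k+1)^{1/p} - k^{1/p} = p⁻¹ ∫ₖ^{k+1} (t⁻¹)^{1/p'} dt` and applying Jensen's
inequality bounds it by `p⁻¹ (log (k+1) - log k)^{1/p'}`. These weights have `ℓ^{p'}` norm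
`(log N)^{1/p'}` by telescoping, so Hölder's inequality settles the nonnegative case. A real
vector splits into its positive and negative parts, which have disjoint supports (a factor
`2^{1/p'}`), and a complex one into its real and imaginary parts (a factor `2 = 2^{1/p} 2^{1/p'}`).
-/

open Finset Real MeasureTheory

section Scalar

variable {p p' : ℝ}

lemma rpow_add_one_sub_rpow_le (hpp' : p.HolderConjugate p') {y : ℝ} (hy : 0 < y) :
    (y + 1) ^ (1 / p) - y ^ (1 / p) ≤ p⁻¹ * (log (y + 1) - log y) ^ (1 / p') := by
  have hp' : 0 < 1 / p' := one_div_pos.2 hpp'.symm.pos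
  have hle : y ≤ y + 1 := by linarith
  set μ : Measure ℝ := volume.restrict (Set.Ioc y (y + 1))
  have : IsProbabilityMeasure μ := ⟨by simp [μ]⟩
  have hinv : ContinuousOn (fun t : ℝ => t⁻¹) (Set.Icc y (y + 1)) :=
    continuousOn_inv₀.mono fun t ht => (hy.trans_le ht.1).ne'
  have hftc : (y + 1) ^ (1 / p) - y ^ (1 / p) = p⁻¹ * ∫ t, (t⁻¹) ^ (1 / p') ∂μ := by
    have hint : ∫ t in y..y + 1, (t⁻¹) ^ (1 / p') = ∫ t in y..y + 1, t ^ (1 / p - 1) := by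
      refine intervalIntegral.integral_congr fun t ht => ?_
      have ht : 0 < t := hy.trans_le (Set.uIcc_of_le hle ▸ ht).1
      simp only [one_div, inv_rpow ht.le, ← rpow_neg ht.le, hpp'.inv_sub_one]
    have hp : 0 < 1 / p := one_div_pos.2 hpp'.pos
    rw [← intervalIntegral.integral_of_le hle, hint, integral_rpow (Or.inl (by linarith)),
      sub_add_cancel]
    field_simp [hpp'.ne_zero]
  have hlog : ∫ t, t⁻¹ ∂μ = log (y + 1) - log y := by
    rw [← intervalIntegral.integral_of_le hle, integral_inv_of_pos hy (by linarith),
      log_div (by linarith) hy.ne']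
  have hjensen : ∫ t, (t⁻¹) ^ (1 / p') ∂μ ≤ (∫ t, t⁻¹ ∂μ) ^ (1 / p') :=
    (concaveOn_rpow hp'.le (by rw [one_div, ← hpp'.one_sub_inv]; linarith [hpp'.inv_nonneg])
      ).le_map_integral (continuousOn_id.rpow_const fun _ _ => Or.inr hp'.le) isClosed_Ici
      ((ae_restrict_mem measurableSet_Ioc).mono fun t ht => inv_nonneg.2 (hy.trans ht.1).le)
      (hinv.integrableOn_Icc.mono_set Set.Ioc_subset_Icc_self)
      ((hinv.rpow_const fun _ _ => Or.inr hp'.le).integrableOn_Icc.mono_set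
        Set.Ioc_subset_Icc_self)
  rw [hftc, ← hlog]
  gcongr
  exact hpp'.inv_nonneg

/-- At `k = 0` the logarithmic term vanishes, since `log 0 = 0` in Lean. -/
lemma natCast_add_one_rpow_sub_rpow_le (hpp' : p.HolderConjugate p') (k : ℕ) :
    ((k : ℝ) + 1) ^ (1 / p) - (k : ℝ) ^ (1 / p) ≤
      (if k = 0 then 1 else 0) + p⁻¹ * (log (k + 1) - log k) ^ (1 / p') := by
  rcases Nat.eq_zero_or_pos k with rfl | hk
  · simp [zero_rpow (inv_pos.2 hpp'.pos).ne', zero_rpow (inv_pos.2 hpp'.symm.pos).ne']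
  · simpa [hk.ne'] using rpow_add_one_sub_rpow_le hpp' (Nat.cast_pos.2 hk)

lemma le_sum_rpow_rpow_one_div {ι : Type*} {s : Finset ι} {f : ι → ℝ} (hf : ∀ i ∈ s, 0 ≤ f i)
    {i : ι} (hi : i ∈ s) (hp : 0 < p) : f i ≤ (∑ j ∈ s, f j ^ p) ^ (1 / p) := by
  calc f i = (f i ^ p) ^ (1 / p) := by
        rw [← rpow_mul (hf i hi), mul_one_div_cancel hp.ne', rpow_one]
    _ ≤ _ := by
        gcongr
        exacts [rpow_nonneg (hf i hi) p, single_le_sum (fun j hj => rpow_nonneg (hf j hj) p) hi]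

lemma sum_mul_rpow_succ_sub_rpow_le (hpp' : p.HolderConjugate p') {c : ℕ → ℝ}
    (hc : ∀ k, 0 ≤ c k) (n : ℕ) :
    ∑ k ∈ range n, c k * (((k : ℝ) + 1) ^ (1 / p) - (k : ℝ) ^ (1 / p)) ≤
      (1 + p⁻¹ * log n ^ (1 / p')) * (∑ k ∈ range n, c k ^ p) ^ (1 / p) := by
  set g : ℕ → ℝ := fun k => (log (k + 1) - log k) ^ (1 / p')
  set cp := (∑ k ∈ range n, c k ^ p) ^ (1 / p)
  have hΔ : ∀ k : ℕ, 0 ≤ log ((k : ℝ) + 1) - log k := by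
    intro k
    rcases Nat.eq_zero_or_pos k with rfl | hk
    · simp
    · exact sub_nonneg.2 (log_le_log (by positivity) (by linarith))
  have hhead : ∑ k ∈ range n, c k * (if k = 0 then 1 else 0) ≤ cp := by
    simp only [mul_ite, mul_one, mul_zero, sum_ite_eq', mem_range]
    split_ifs with hn
    · exact le_sum_rpow_rpow_one_div (fun k _ => hc k) (mem_range.2 hn) hpp'.pos
    · exact rpow_nonneg (sum_nonneg fun k _ => rpow_nonneg (hc k) p) _
  have hholder : ∑ k ∈ range n, c k * g k ≤ cp * log n ^ (1 / p') := by
    have hg : ∑ k ∈ range n, g k ^ p' = log n := by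
      simp only [g, ← rpow_mul (hΔ _), one_div_mul_cancel hpp'.symm.ne_zero, rpow_one]
      simpa using sum_range_sub (fun k : ℕ => log k) n
    rw [← hg]
    exact inner_le_Lp_mul_Lq_of_nonneg (range n) hpp' (fun k _ => hc k) fun k _ =>
      rpow_nonneg (hΔ k) _
  calc _ ≤ ∑ k ∈ range n, (c k * (if k = 0 then 1 else 0) + p⁻¹ * (c k * g k)) := by
        gcongr with k
        rw [mul_left_comm, ← mul_add]
        exact mul_le_mul_of_nonneg_left (natCast_add_one_rpow_sub_rpow_le hpp' k) (hc k)
    _ = ∑ k ∈ range n, c k * (if k = 0 then 1 else 0) + p⁻¹ * ∑ k ∈ range n, c k * g k := by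
        rw [sum_add_distrib, mul_sum]
    _ ≤ cp + p⁻¹ * (cp * log n ^ (1 / p')) := by
        gcongr
        exact hpp'.inv_nonneg
    _ = _ := by ring

lemma add_le_two_rpow_mul_rpow_add_rpow (hpp' : p.HolderConjugate p') {u v : ℝ} (hu : 0 ≤ u)
    (hv : 0 ≤ v) : u + v ≤ 2 ^ (1 / p') * (u ^ p + v ^ p) ^ (1 / p) := by
  have := inner_le_Lp_mul_Lq_of_nonneg univ hpp' (f := ![u, v]) (g := 1)
    (by simp [Fin.forall_fin_two, hu, hv]) (by simp)
  simpa [Fin.sum_univ_two, one_add_one_eq_two, mul_comm] using this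

lemma abs_rpow_eq_posPart_rpow_add_negPart_rpow (hp : 0 < p) (x : ℝ) :
    |x| ^ p = x⁺ ^ p + x⁻ ^ p := by
  rcases le_total 0 x with hx | hx
  · simp [hx, abs_of_nonneg, zero_rpow hp.ne']
  · simp [hx, abs_of_nonpos, zero_rpow hp.ne']

lemma sum_range_sub_mul_eq_sum_mul_sub {n : ℕ} {c φ : ℕ → ℝ} (hc : c n = 0) (hφ : φ 0 = 0) :
    ∑ k ∈ range n, (c k - c (k + 1)) * φ (k + 1) = ∑ k ∈ range n, c k * (φ (k + 1) - φ k) := by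
  have := sum_range_sub (fun k => c k * φ k) n
  simp only [hc, hφ, zero_mul, mul_zero, sub_zero] at this
  rw [← sub_eq_zero, ← sum_sub_distrib, ← neg_eq_zero, ← this, ← sum_neg_distrib]
  exact sum_congr rfl fun k _ => by ring

end Scalar

section Rearrangement

variable {n : ℕ}

noncomputable def decreasingRearrangement (b : Fin n → ℝ) (k : ℕ) : ℝ :=
  if h : k < n then b (Tuple.sort (-b) ⟨k, h⟩) else 0

variable (b : Fin n → ℝ)

lemma decreasingRearrangement_sort_symm (j : Fin n) :
    decreasingRearrangement b ((Tuple.sort (-b)).symm j) = b j := by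
  simp [decreasingRearrangement]

lemma decreasingRearrangement_of_le {k : ℕ} (hk : n ≤ k) : decreasingRearrangement b k = 0 := by
  simp [decreasingRearrangement, hk]

lemma sum_range_decreasingRearrangement (f : ℝ → ℝ) :
    ∑ k ∈ range n, f (decreasingRearrangement b k) = ∑ j, f (b j) := by
  rw [← Fin.sum_univ_eq_sum_range, ← Equiv.sum_comp (Tuple.sort (-b)) (fun j => f (b j))]
  simp [decreasingRearrangement]

variable {b}

lemma decreasingRearrangement_nonneg (hb : 0 ≤ b) (k : ℕ) : 0 ≤ decreasingRearrangement b k := by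
  unfold decreasingRearrangement
  split_ifs
  exacts [hb _, le_rfl]

lemma decreasingRearrangement_succ_le (hb : 0 ≤ b) (k : ℕ) :
    decreasingRearrangement b (k + 1) ≤ decreasingRearrangement b k := by
  rcases lt_or_ge (k + 1) n with hk | hk
  · have := Tuple.monotone_sort (-b) (show (⟨k, by omega⟩ : Fin n) ≤ ⟨k + 1, hk⟩ from k.le_succ)
    simpa [decreasingRearrangement, hk, show k < n by omega] using this
  · rw [decreasingRearrangement_of_le b hk]
    exact decreasingRearrangement_nonneg hb k

end Rearrangement

section Seminorm

variable {𝕜 : Type*} [RCLike 𝕜] {p p' : ℝ}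

lemma sum_sub_smul_indicator_eq {n : ℕ} (σ : Equiv.Perm (Fin n)) {c : ℕ → ℝ} (hc : c n = 0) :
    ∑ k ∈ range n, ((c k - c (k + 1) : ℝ) : 𝕜) •
        (fun j => if j ∈ ({i : Fin n | (i : ℕ) < k + 1} : Finset _).map σ.toEmbedding
          then (1 : 𝕜) else 0) =
      fun j => (c (σ.symm j) : 𝕜) := by
  ext j
  set r := ((σ.symm j : Fin n) : ℕ)
  have hr : r ≤ n := (σ.symm j).2.le
  simp only [Finset.sum_apply, Pi.smul_apply, mem_map_equiv, mem_filter, mem_univ, true_and,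
    Nat.lt_succ_iff, smul_eq_mul, mul_ite, mul_one, mul_zero]
  rw [← sum_filter, range_eq_Ico, Ico_filter_le_of_left_le r.zero_le]
  have := sum_Ico_sub (fun k => -c k) hr
  simp only [hc, neg_zero, sub_neg_eq_add, zero_add, neg_add_eq_sub] at this
  exact_mod_cast this

lemma seminorm_le_sum_mul_sub {n : ℕ} (T : Seminorm 𝕜 (Fin n → 𝕜)) {φ : ℕ → ℝ} (hφ0 : φ 0 = 0)
    (hT : ∀ S : Finset (Fin n), T (fun j => if j ∈ S then 1 else 0) ≤ φ #S)
    (σ : Equiv.Perm (Fin n)) {c : ℕ → ℝ} (hc : ∀ k, c (k + 1) ≤ c k) (hcn : c n = 0) :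
    T (fun j => (c (σ.symm j) : 𝕜)) ≤ ∑ k ∈ range n, c k * (φ (k + 1) - φ k) := by
  rw [← sum_sub_smul_indicator_eq σ hcn, ← sum_range_sub_mul_eq_sum_mul_sub hcn hφ0]
  refine (le_sum_of_subadditive T (map_zero T).le (map_add_le_add T) _ _).trans (sum_le_sum ?_)
  intro k hk
  have hck : 0 ≤ c k - c (k + 1) := sub_nonneg.2 (hc k)
  rw [map_smul_eq_mul, RCLike.norm_ofReal, abs_of_nonneg hck]
  refine mul_le_mul_of_nonneg_left ((hT _).trans_eq ?_) hck
  rw [card_map, Fin.card_filter_val_lt, min_eq_right (mem_range.1 hk)]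

lemma seminorm_ofReal_le_of_nonneg {n : ℕ} (hpp' : p.HolderConjugate p')
    (T : Seminorm 𝕜 (Fin n → 𝕜)) {C : ℝ} (hC : 0 ≤ C)
    (hT : ∀ S : Finset (Fin n), T (fun j => if j ∈ S then 1 else 0) ≤ C * (#S : ℝ) ^ (1 / p))
    {b : Fin n → ℝ} (hb : 0 ≤ b) :
    T (fun j => (b j : 𝕜)) ≤ C * (1 + p⁻¹ * log n ^ (1 / p')) * (∑ j, b j ^ p) ^ (1 / p) := by
  have hlayers := seminorm_le_sum_mul_sub T (φ := fun k => C * (k : ℝ) ^ (1 / p))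
    (by simp [zero_rpow (inv_pos.2 hpp'.pos).ne']) hT (Tuple.sort (-b))
    (decreasingRearrangement_succ_le hb) (decreasingRearrangement_of_le b le_rfl)
  simp only [decreasingRearrangement_sort_symm, Nat.cast_add, Nat.cast_one, ← mul_sub,
    mul_left_comm _ C, ← mul_sum] at hlayers
  refine hlayers.trans ?_
  rw [mul_assoc, ← sum_range_decreasingRearrangement b (· ^ p)]
  gcongr
  exact sum_mul_rpow_succ_sub_rpow_le hpp' (decreasingRearrangement_nonneg hb) n

variable {ι : Type*} [Fintype ι]

lemma seminorm_ofReal_le_of_forall_nonneg (hpp' : p.HolderConjugate p') (T : Seminorm 𝕜 (ι → 𝕜))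
    {K : ℝ} (hK : 0 ≤ K)
    (h : ∀ b : ι → ℝ, 0 ≤ b → T (fun j => (b j : 𝕜)) ≤ K * (∑ j, b j ^ p) ^ (1 / p))
    (r : ι → ℝ) : T (fun j => (r j : 𝕜)) ≤ 2 ^ (1 / p') * K * (∑ j, |r j| ^ p) ^ (1 / p) := by
  set U := (∑ j, (r j)⁺ ^ p) ^ (1 / p)
  set V := (∑ j, (r j)⁻ ^ p) ^ (1 / p)
  have hUV : U ^ p + V ^ p = ∑ j, |r j| ^ p := by
    simp only [U, V, one_div]
    rw [rpow_inv_rpow (sum_nonneg fun j _ => rpow_nonneg (posPart_nonneg _) _) hpp'.ne_zero,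
      rpow_inv_rpow (sum_nonneg fun j _ => rpow_nonneg (negPart_nonneg _) _) hpp'.ne_zero,
      ← sum_add_distrib]
    exact sum_congr rfl fun j _ => (abs_rpow_eq_posPart_rpow_add_negPart_rpow hpp'.pos _).symm
  calc T (fun j => (r j : 𝕜))
      = T ((fun j => (((r j)⁺ : ℝ) : 𝕜)) - fun j => (((r j)⁻ : ℝ) : 𝕜)) := by
        congr; ext j; simp [← RCLike.ofReal_sub, posPart_sub_negPart]
    _ ≤ T (fun j => (((r j)⁺ : ℝ) : 𝕜)) + T (fun j => (((r j)⁻ : ℝ) : 𝕜)) :=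
        map_sub_le_add T _ _
    _ ≤ K * U + K * V :=
        add_le_add (h _ fun j => posPart_nonneg _) (h _ fun j => negPart_nonneg _)
    _ ≤ K * (2 ^ (1 / p') * (U ^ p + V ^ p) ^ (1 / p)) := by
        rw [← mul_add]
        gcongr
        exact add_le_two_rpow_mul_rpow_add_rpow hpp' (by positivity) (by positivity)
    _ = _ := by rw [hUV]; ring

lemma seminorm_le_of_forall_ofReal_le (T : Seminorm 𝕜 (ι → 𝕜)) {M : ℝ} (hM : 0 ≤ M)
    (h : ∀ r : ι → ℝ, T (fun j => (r j : 𝕜)) ≤ M * (∑ j, |r j| ^ p) ^ (1 / p)) (hp : 0 < p)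
    (a : ι → 𝕜) : T a ≤ 2 * M * (∑ j, ‖a j‖ ^ p) ^ (1 / p) := by
  have hpart : ∀ f : 𝕜 → ℝ, (∀ z, |f z| ≤ ‖z‖) →
      T (fun j => (f (a j) : 𝕜)) ≤ M * (∑ j, ‖a j‖ ^ p) ^ (1 / p) := fun f hf =>
    (h _).trans (by gcongr with j; exact hf _)
  calc T a = T ((fun j => (RCLike.re (a j) : 𝕜)) +
        (RCLike.I : 𝕜) • fun j => (RCLike.im (a j) : 𝕜)) := by
        congr; ext j
        simp only [Pi.add_apply, Pi.smul_apply, smul_eq_mul, mul_comm RCLike.I]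
        exact (RCLike.re_add_im _).symm
    _ ≤ T (fun j => (RCLike.re (a j) : 𝕜)) + T (fun j => (RCLike.im (a j) : 𝕜)) := by
        refine (map_add_le_add T _ _).trans (add_le_add le_rfl ?_)
        rw [map_smul_eq_mul]
        refine mul_le_of_le_one_left (apply_nonneg T _) ?_
        rw [RCLike.norm_I]; split_ifs <;> norm_num
    _ ≤ M * (∑ j, ‖a j‖ ^ p) ^ (1 / p) + M * (∑ j, ‖a j‖ ^ p) ^ (1 / p) :=
        add_le_add (hpart _ RCLike.abs_re_le_norm) (hpart _ RCLike.abs_im_le_norm)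
    _ = _ := by ring

end Seminorm

theorem restricted_implies_strong_general (p p' C : ℝ) (hp : 1 < p) (hpp' : 1 / p + 1 / p' = 1)
    (hC : 0 < C) (N : ℕ) (T : (Fin N → ℂ) → ℝ)
    (hTsub : ∀ a b, T (a + b) ≤ T a + T b)
    (hThom : ∀ (l : ℂ) (a : Fin N → ℂ), T (l • a) = ‖l‖ * T a)
    (hTres : ∀ S : Finset (Fin N),
      T (fun j => if j ∈ S then 1 else 0) ≤
        C * (∑ j, ‖(if j ∈ S then (1 : ℂ) else 0)‖ ^ p) ^ (1 / p)) :
    ∀ a : Fin N → ℂ,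
      T a ≤ 2 ^ (1 / p) * 4 ^ (1 / p') * C * (1 + p⁻¹ * (Real.log N) ^ (1 / p')) *
        (∑ j, ‖a j‖ ^ p) ^ (1 / p) := by
  intro a
  have hpq : p.HolderConjugate p' := holderConjugate_iff.2 ⟨hp, by simpa only [one_div] using hpp'⟩
  let Tₛ : Seminorm ℂ (Fin N → ℂ) := .of T hTsub hThom
  have hK : 0 ≤ C * (1 + p⁻¹ * log N ^ (1 / p')) := by
    have := log_natCast_nonneg N
    have := hpq.inv_nonneg
    positivity
  have hres : ∀ S : Finset (Fin N), Tₛ (fun j => if j ∈ S then 1 else 0) ≤ C * (#S : ℝ) ^ (1 / p) :=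
    fun S => (hTres S).trans_eq (by simp [apply_ite (‖·‖ ^ p), zero_rpow hpq.ne_zero])
  have hreal := seminorm_ofReal_le_of_forall_nonneg hpq Tₛ hK
    fun b hb => seminorm_ofReal_le_of_nonneg hpq Tₛ hC.le hres hb
  have hconst : (2 : ℝ) ^ (1 / p) * 4 ^ (1 / p') = 2 * 2 ^ (1 / p') := by
    rw [show (4 : ℝ) = 2 * 2 by norm_num, mul_rpow zero_le_two zero_le_two, ← mul_assoc,
      ← rpow_add zero_lt_two, hpp', rpow_one]
  calc T a ≤ 2 * (2 ^ (1 / p') * (C * (1 + p⁻¹ * log N ^ (1 / p')))) * (∑ j, ‖a j‖ ^ p) ^ (1 / p) :=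
        seminorm_le_of_forall_ofReal_le Tₛ (by positivity) hreal hpq.pos a
    _ = _ := by rw [hconst]; ring

/-- Restricted-type bounds upgrade to strong-type bounds with a logarithmic
loss (Lemma 3.1). -/
theorem restricted_implies_strong (p p' C : ℝ) (hp : 1 < p) (hpp' : 1 / p + 1 / p' = 1)
    (hC : 0 < C) (N : ℕ) (hN : 1 ≤ N) (T : (Fin N → ℂ) → ℝ)
    (hTnn : ∀ a, 0 ≤ T a)
    (hTsub : ∀ a b, T (a + b) ≤ T a + T b)
    (hThom : ∀ (l : ℂ) (a : Fin N → ℂ), T (l • a) = ‖l‖ * T a)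
    (hTres : ∀ S : Finset (Fin N),
      T (fun j => if j ∈ S then 1 else 0) ≤
        C * (∑ j, ‖(if j ∈ S then (1 : ℂ) else 0)‖ ^ p) ^ (1 / p)) :
    ∀ a : Fin N → ℂ,
      T a ≤ 2 ^ (1 / p) * 4 ^ (1 / p') * C * (1 + p⁻¹ * (Real.log N) ^ (1 / p')) *
        (∑ j, ‖a j‖ ^ p) ^ (1 / p) :=
  restricted_implies_strong_general p p' C hp hpp' hC N T hTsub hThom hTres
end

section
/- Let p ∈ (1,∞) and N ≥ 1 an integer. For every a ∈ ℂ^N, one has ‖a‖_{ℓ^{p,1}} ≤ (1 + p^{-1}(log N)^{1/p'})·‖a‖_{ℓ^p}, where ‖a‖_{ℓ^{p,1}} = ∫_0^∞ λ_a(s)^{1/p} ds and λ_a(s) = #{j ∈ {1,...,N} : |a_j| > s}. -/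
open Finset MeasureTheory

noncomputable section

set_option maxHeartbeats 1000000

/-- The `ℓ^{p,1}` norm of a vector in `ℂ^N` is bounded by
`(1 + p⁻¹ (log N)^{1/p'})` times its `ℓ^p` norm (Lemma 3.2). -/
theorem lorentz_norm_le (p p' : ℝ) (hp : 1 < p) (hpp' : 1 / p + 1 / p' = 1)
    (N : ℕ) (hN : 1 ≤ N) (a : Fin N → ℂ) :
    (∫ s in Set.Ioi (0 : ℝ),
        (((Finset.univ.filter fun j : Fin N => s < ‖a j‖).card : ℝ)) ^ (1 / p))
      ≤ (1 + p⁻¹ * (Real.log N) ^ (1 / p')) * (∑ j, ‖a j‖ ^ p) ^ (1 / p) := by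
  have hp0 : (0:ℝ) < p := by linarith
  have hpq : Real.HolderConjugate p p' := Real.holderConjugate_iff.mpr ⟨hp, by rw [← one_div, ← one_div]; exact hpp'⟩
  have hp'0 : (0:ℝ) < p' := hpq.symm.pos
  have hNpos : (0:ℝ) < N := by exact_mod_cast hN
  have hlogN : 0 ≤ Real.log N := Real.log_nonneg (by exact_mod_cast hN)
  set L : ℝ → ℝ := fun s => ((Finset.univ.filter fun j : Fin N => s < ‖a j‖).card : ℝ)
    with hLdef
  have hL0 : ∀ s, 0 ≤ L s := fun s => Nat.cast_nonneg _
  have hLN : ∀ s, L s ≤ N := by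
    intro s
    have h := Finset.card_filter_le (Finset.univ : Finset (Fin N)) (fun j => s < ‖a j‖)
    rw [Finset.card_univ, Fintype.card_fin] at h
    show ((Finset.univ.filter fun j : Fin N => s < ‖a j‖).card : ℝ) ≤ (N:ℝ)
    exact_mod_cast h
  have hLsum : ∀ s, L s = ∑ j, if s < ‖a j‖ then (1:ℝ) else 0 := by
    intro s; rw [hLdef]; push_cast [Finset.card_filter]; rfl
  have hLmeas : Measurable L := by
    have h : L = fun s => ∑ j, if s < ‖a j‖ then (1:ℝ) else 0 := funext hLsum
    rw [h]
    exact Finset.measurable_sum _ fun j _ =>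
      Measurable.ite measurableSet_Iio measurable_const measurable_const
  set f : ℝ → ℝ := fun s => L s ^ (1/p) with hfdef
  have hfmeas : Measurable f := by fun_prop
  have hf0 : ∀ s, 0 ≤ f s := fun s => Real.rpow_nonneg (hL0 s) _
  have hfbound : ∀ s, f s ≤ (N:ℝ) ^ (1/p : ℝ) := fun s =>
    Real.rpow_le_rpow (hL0 s) (hLN s) (by positivity)
  have hfint : ∀ b c : ℝ, IntegrableOn f (Set.Ioc b c) := by
    intro b c
    refine Integrable.mono' (g := fun _ => (N:ℝ) ^ (1/p:ℝ)) (integrableOn_const ?_)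
      hfmeas.aestronglyMeasurable ?_
    · rw [Real.volume_Ioc]; exact ENNReal.ofReal_ne_top
    · filter_upwards with s
      rw [Real.norm_of_nonneg (hf0 s)]; exact hfbound s
  set A : ℝ := (∑ j, ‖a j‖ ^ p) ^ (1 / p) with hAdef
  have hsum_nonneg : 0 ≤ ∑ j, ‖a j‖ ^ p :=
    Finset.sum_nonneg fun j _ => Real.rpow_nonneg (norm_nonneg _) _
  have hA0 : 0 ≤ A := Real.rpow_nonneg hsum_nonneg _
  have hApow : A ^ p = ∑ j, ‖a j‖ ^ p := by
    rw [hAdef, ← Real.rpow_mul hsum_nonneg, one_div_mul_cancel (ne_of_gt hp0), Real.rpow_one]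
  obtain ⟨j0, -, hj0⟩ := Finset.exists_max_image Finset.univ (fun j => ‖a j‖)
    ⟨⟨0, hN⟩, Finset.mem_univ _⟩
  set M : ℝ := ‖a j0‖ with hMdef
  have hM0 : 0 ≤ M := norm_nonneg _
  have hMA : M ≤ A := by
    have h1 : M ^ p ≤ ∑ j, ‖a j‖ ^ p :=
      Finset.single_le_sum (f := fun j => ‖a j‖ ^ p)
        (fun j _ => Real.rpow_nonneg (norm_nonneg _) _) (Finset.mem_univ j0)
    calc M = (M ^ p) ^ (1/p : ℝ) := by
            rw [← Real.rpow_mul hM0, mul_one_div_cancel (ne_of_gt hp0), Real.rpow_one]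
      _ ≤ A := Real.rpow_le_rpow (Real.rpow_nonneg hM0 _) h1 (by positivity)
  have hLvanish : ∀ s, M ≤ s → L s = 0 := by
    intro s hs
    have h : (Finset.univ.filter fun j : Fin N => s < ‖a j‖) = ∅ :=
      Finset.filter_false_of_mem fun j _ => not_lt.mpr ((hj0 j (Finset.mem_univ j)).trans hs)
    rw [hLdef]; simp only [h, Finset.card_empty, Nat.cast_zero]
  have hc2 : 0 ≤ p⁻¹ * Real.log N ^ (1/p' : ℝ) :=
    mul_nonneg (by positivity) (Real.rpow_nonneg hlogN _)
  rcases eq_or_lt_of_le hA0 with hAz | hApos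
  · -- A = 0, so all entries vanish
    have hMz : M = 0 := le_antisymm (hAz ▸ hMA) hM0
    have hz : Set.EqOn (fun s => L s ^ (1/p)) (fun _ => (0:ℝ)) (Set.Ioi 0) := by
      intro s hs
      simp only
      rw [hLvanish s (hMz ▸ le_of_lt hs), Real.zero_rpow (by positivity)]
    show (∫ s in Set.Ioi (0:ℝ), L s ^ (1/p)) ≤ (1 + p⁻¹ * (Real.log N) ^ (1 / p')) * A
    rw [setIntegral_congr_fun measurableSet_Ioi hz, integral_zero, ← hAz, mul_zero]
  · -- main case : A > 0
    set s0 : ℝ := A * (N:ℝ) ^ (-(1/p) : ℝ) with hs0def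
    have hs0pos : 0 < s0 := mul_pos hApos (Real.rpow_pos_of_pos hNpos _)
    have hs0A : s0 * (N:ℝ) ^ (1/p : ℝ) = A := by
      rw [hs0def, mul_assoc, ← Real.rpow_add hNpos]
      norm_num
    set T : ℝ := max M s0 with hTdef
    have hs0T : s0 ≤ T := le_max_right _ _
    have key : (∫ s in Set.Ioi (0:ℝ), f s)
        = (∫ s in Set.Ioc (0:ℝ) s0, f s) + ∫ s in Set.Ioc s0 T, f s := by
      have h1 : Set.EqOn f ((Set.Ioc (0:ℝ) T).indicator f) (Set.Ioi 0) := by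
        intro s hs
        by_cases hsT : s ≤ T
        · rw [Set.indicator_of_mem (Set.mem_Ioc.mpr ⟨hs, hsT⟩ : s ∈ Set.Ioc (0:ℝ) T) f]
        · rw [Set.indicator_of_notMem (fun h => hsT h.2)]
          have hMs : M ≤ s := le_trans (le_max_left M s0) (le_of_not_ge hsT)
          rw [hfdef]; simp only
          rw [hLvanish s hMs, Real.zero_rpow (by positivity)]
      rw [setIntegral_congr_fun measurableSet_Ioi h1,
        setIntegral_indicator measurableSet_Ioc,
        Set.inter_eq_right.mpr (Set.Ioc_subset_Ioi_self),
        ← Set.Ioc_union_Ioc_eq_Ioc hs0pos.le hs0T,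
        setIntegral_union (Set.Ioc_disjoint_Ioc_of_le le_rfl) measurableSet_Ioc
          (hfint _ _) (hfint _ _)]
    have I1 : (∫ s in Set.Ioc (0:ℝ) s0, f s) ≤ A := by
      calc (∫ s in Set.Ioc (0:ℝ) s0, f s) ≤ ∫ _ in Set.Ioc (0:ℝ) s0, (N:ℝ) ^ (1/p:ℝ) := by
            refine setIntegral_mono_on (hfint _ _)
              (integrableOn_const ?_) measurableSet_Ioc
              (fun s _ => hfbound s)
            rw [Real.volume_Ioc]; exact ENNReal.ofReal_ne_top
        _ = s0 * (N:ℝ) ^ (1/p:ℝ) := by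
            rw [setIntegral_const, Real.volume_real_Ioc, smul_eq_mul,
              max_eq_left (by linarith)]
            ring
        _ = A := hs0A
    have I2 : (∫ s in Set.Ioc s0 T, f s) ≤ p⁻¹ * Real.log N ^ (1/p') * A := by
      rcases le_or_gt M s0 with hMs0 | hs0M
      · rw [hTdef, max_eq_right hMs0]
        simp only [Set.Ioc_self, Measure.restrict_empty, integral_zero_measure]
        exact mul_nonneg hc2 hA0
      · rw [hTdef, max_eq_left hs0M.le]
        set S : Set ℝ := Set.Ioc s0 M with hSdef
        have hSmeas : MeasurableSet S := measurableSet_Ioc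
        have hSfin : IsFiniteMeasure (volume.restrict S) := by
          constructor
          rw [Measure.restrict_apply_univ, hSdef, Real.volume_Ioc]
          exact ENNReal.ofReal_lt_top
        have hSpos : ∀ s ∈ S, 0 < s := fun s hs => lt_trans hs0pos hs.1
        set F : ℝ → ℝ := fun s => (L s * s ^ (p-1)) ^ (1/p) with hFdef
        set G : ℝ → ℝ := fun s => s ^ (-(1/p') : ℝ) with hGdef
        have hFmeas : Measurable F := by fun_prop
        have hGmeas : Measurable G := by fun_prop
        have hexp : (p-1) * (1/p) + (-(1/p')) = 0 := by
          have h1 : (p-1) * (1/p) = 1 - 1/p := by field_simp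
          rw [h1]; linarith
        have hfFG : Set.EqOn f (fun s => F s * G s) S := by
          intro s hs
          have hs' : 0 < s := hSpos s hs
          simp only [hfdef, hFdef, hGdef]
          rw [Real.mul_rpow (hL0 s) (Real.rpow_nonneg hs'.le _),
            ← Real.rpow_mul hs'.le, mul_assoc, ← Real.rpow_add hs', hexp,
            Real.rpow_zero, mul_one]
        have hFnonneg : 0 ≤ᵐ[volume.restrict S] F :=
          (ae_restrict_iff' hSmeas).mpr (Filter.Eventually.of_forall fun s hs =>
            Real.rpow_nonneg
              (mul_nonneg (hL0 s) (Real.rpow_nonneg (hSpos s hs).le _)) _)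
        have hGnonneg : 0 ≤ᵐ[volume.restrict S] G :=
          (ae_restrict_iff' hSmeas).mpr (Filter.Eventually.of_forall fun s hs =>
            Real.rpow_nonneg (hSpos s hs).le _)
        have hFmem : MemLp F (ENNReal.ofReal p) (volume.restrict S) := by
          refine MemLp.of_bound hFmeas.aestronglyMeasurable
            (((N:ℝ) * M ^ (p-1)) ^ (1/p:ℝ)) ?_
          rw [ae_restrict_iff' hSmeas]
          filter_upwards with s hs
          have hs' : 0 < s := hSpos s hs
          have hb : 0 ≤ L s * s ^ (p-1) :=
            mul_nonneg (hL0 s) (Real.rpow_nonneg hs'.le _)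
          rw [Real.norm_of_nonneg (Real.rpow_nonneg hb _)]
          refine Real.rpow_le_rpow hb ?_ (by positivity)
          exact mul_le_mul (hLN s) (Real.rpow_le_rpow hs'.le hs.2 (by linarith))
            (Real.rpow_nonneg hs'.le _) (Nat.cast_nonneg _)
        have hGmem : MemLp G (ENNReal.ofReal p') (volume.restrict S) := by
          refine MemLp.of_bound hGmeas.aestronglyMeasurable (s0 ^ (-(1/p') : ℝ)) ?_
          rw [ae_restrict_iff' hSmeas]
          filter_upwards with s hs
          rw [Real.norm_of_nonneg (Real.rpow_nonneg (hSpos s hs).le _)]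
          exact Real.rpow_le_rpow_of_nonpos hs0pos hs.1.le
            (neg_nonpos.mpr (by positivity))
        have hHolder := integral_mul_le_Lp_mul_Lq_of_nonneg hpq hFnonneg hGnonneg hFmem hGmem
        have hFp : (∫ s in S, F s ^ p) = ∫ s in S, L s * s ^ (p-1) := by
          refine setIntegral_congr_fun hSmeas fun s hs => ?_
          have hs' : 0 < s := hSpos s hs
          simp only [hFdef]
          rw [← Real.rpow_mul (mul_nonneg (hL0 s) (Real.rpow_nonneg hs'.le _)),
            one_div_mul_cancel (ne_of_gt hp0), Real.rpow_one]
        have hGp : (∫ s in S, G s ^ p') = ∫ s in S, s⁻¹ := by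
          refine setIntegral_congr_fun hSmeas fun s hs => ?_
          have hs' : 0 < s := hSpos s hs
          simp only [hGdef]
          rw [← Real.rpow_mul hs'.le]
          have he : -(1/p') * p' = -1 := by field_simp
          rw [he, Real.rpow_neg_one]
        have hrint : ∀ c : ℝ, IntegrableOn (fun s : ℝ => s ^ (p-1)) (Set.Ioc 0 c) := by
          intro c
          rcases le_or_gt c 0 with hc | hc
          · rw [Set.Ioc_eq_empty (not_lt.mpr hc)]
            exact integrableOn_empty
          · exact (intervalIntegrable_iff_integrableOn_Ioc_of_le hc.le).mp
              (intervalIntegral.intervalIntegrable_rpow' (by linarith))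
        have hlayer : (∫ s in S, L s * s ^ (p-1)) ≤ (∑ j, ‖a j‖ ^ p) / p := by
          have heq : Set.EqOn (fun s => L s * s ^ (p-1))
              (fun s => ∑ j, (Set.Iio ‖a j‖).indicator (fun t => t ^ (p-1)) s) S := by
            intro s _
            simp only
            rw [hLsum, Finset.sum_mul]
            refine Finset.sum_congr rfl fun j _ => ?_
            by_cases h : s < ‖a j‖
            · rw [if_pos h, Set.indicator_of_mem (Set.mem_Iio.mpr h), one_mul]
            · rw [if_neg h, Set.indicator_of_notMem (fun hm => h (Set.mem_Iio.mp hm)),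
                zero_mul]
          rw [setIntegral_congr_fun hSmeas heq, integral_finset_sum]
          · have hterm : ∀ j : Fin N,
                (∫ s in S, (Set.Iio ‖a j‖).indicator (fun t => t ^ (p-1)) s)
                  ≤ ‖a j‖ ^ p / p := by
              intro j
              rw [setIntegral_indicator measurableSet_Iio]
              have hsub : S ∩ Set.Iio ‖a j‖ ⊆ Set.Ioc 0 ‖a j‖ := by
                rintro s ⟨hs1, hs2⟩
                exact ⟨hSpos s hs1, le_of_lt hs2⟩
              have hmono : (∫ s in S ∩ Set.Iio ‖a j‖, s ^ (p-1))
                  ≤ ∫ s in Set.Ioc 0 ‖a j‖, s ^ (p-1) := by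
                refine setIntegral_mono_set (hrint _)
                  ((ae_restrict_iff' measurableSet_Ioc).mpr
                    (Filter.Eventually.of_forall fun s hs => Real.rpow_nonneg hs.1.le _))
                  (HasSubset.Subset.eventuallyLE hsub)
              refine hmono.trans (le_of_eq ?_)
              rw [← intervalIntegral.integral_of_le (norm_nonneg (a j)),
                integral_rpow (Or.inl (by linarith : (-1:ℝ) < p - 1))]
              have hpe : p - 1 + 1 = p := by ring
              rw [hpe, Real.zero_rpow (ne_of_gt hp0), sub_zero]
            calc (∑ j, ∫ s in S, (Set.Iio ‖a j‖).indicator (fun t => t ^ (p-1)) s)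
                ≤ ∑ j, ‖a j‖ ^ p / p := Finset.sum_le_sum fun j _ => hterm j
              _ = (∑ j, ‖a j‖ ^ p) / p := by rw [Finset.sum_div]
          · intro j _
            exact ((intervalIntegrable_iff_integrableOn_Ioc_of_le hs0M.le).mp
              (intervalIntegral.intervalIntegrable_rpow' (by linarith))).indicator
              measurableSet_Iio
        have hF1 : (∫ s in S, F s ^ p) ^ (1/p : ℝ) ≤ A / p ^ (1/p : ℝ) := by
          rw [hFp, hAdef, ← Real.div_rpow hsum_nonneg hp0.le]
          refine Real.rpow_le_rpow (setIntegral_nonneg hSmeas fun s hs =>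
            mul_nonneg (hL0 s) (Real.rpow_nonneg (hSpos s hs).le _)) hlayer (by positivity)
        have hG1 : (∫ s in S, G s ^ p') ^ (1/p' : ℝ)
            ≤ ((1/p) * Real.log N) ^ (1/p' : ℝ) := by
          have hint : (∫ s in S, s⁻¹) = Real.log (M / s0) := by
            have h0 : (0:ℝ) ∉ Set.uIcc s0 M := by
              rw [Set.uIcc_of_le hs0M.le]
              exact fun h => absurd h.1 (not_le.mpr hs0pos)
            rw [hSdef, ← intervalIntegral.integral_of_le hs0M.le,
              integral_inv h0]
          have hMdiv : M / s0 ≤ (N:ℝ) ^ (1/p:ℝ) := by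
            rw [div_le_iff₀ hs0pos, mul_comm, hs0A]
            exact hMA
          have hlog : Real.log (M / s0) ≤ (1/p) * Real.log N := by
            calc Real.log (M/s0) ≤ Real.log ((N:ℝ) ^ (1/p:ℝ)) :=
                Real.log_le_log (div_pos (lt_trans hs0pos hs0M) hs0pos) hMdiv
              _ = (1/p) * Real.log N := Real.log_rpow hNpos _
          rw [hGp, hint]
          refine Real.rpow_le_rpow (Real.log_nonneg ?_) hlog (by positivity)
          exact (one_le_div hs0pos).mpr hs0M.le
        have hppow : p ^ (1/p:ℝ) * p ^ (1/p':ℝ) = p := by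
          rw [← Real.rpow_add hp0, hpp', Real.rpow_one]
        calc (∫ s in S, f s) = ∫ s in S, F s * G s :=
              setIntegral_congr_fun hSmeas hfFG
          _ ≤ (∫ s in S, F s ^ p) ^ (1/p:ℝ) * (∫ s in S, G s ^ p') ^ (1/p':ℝ) := hHolder
          _ ≤ (A / p ^ (1/p:ℝ)) * ((1/p) * Real.log N) ^ (1/p':ℝ) := by
              refine mul_le_mul hF1 hG1 (Real.rpow_nonneg ?_ _) (by positivity)
              exact setIntegral_nonneg hSmeas fun s hs =>
                Real.rpow_nonneg (Real.rpow_nonneg (hSpos s hs).le _) _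
          _ = p⁻¹ * Real.log N ^ (1/p') * A := by
              rw [Real.mul_rpow (by positivity) hlogN,
                Real.div_rpow zero_le_one hp0.le, Real.one_rpow]
              rw [show A / p ^ (1/p:ℝ) * (1 / p ^ (1/p':ℝ) * Real.log (N:ℝ) ^ (1/p':ℝ))
                  = A * Real.log (N:ℝ) ^ (1/p':ℝ) / (p ^ (1/p:ℝ) * p ^ (1/p':ℝ)) from by
                    ring, hppow]
              ring
    calc (∫ s in Set.Ioi (0:ℝ), f s) = _ := key
      _ ≤ A + p⁻¹ * Real.log N ^ (1/p') * A := add_le_add I1 I2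
      _ = (1 + p⁻¹ * (Real.log N) ^ (1 / p')) * A := by ring
end
end

section
/- Let γ: [0,1] → ℝ^n be a C^n curve. Then there exists a constant C = C(γ,n) such that for every choice of points 0 < u_1 < u_2 < ... < u_n < 1, one has |det(γ'(u_1), γ'(u_2), ..., γ'(u_n))| ≤ C·∏_{1 ≤ i < j ≤ n} (u_j − u_i), where the determinant is of the n×n matrix whose columns are γ'(u_1), ..., γ'(u_n). -/
open Finset

noncomputable section

open Polynomial in
private lemma poly_contDiff (p : Polynomial ℝ) (k : ℕ) :
    ContDiff ℝ k fun x : ℝ => p.eval x := by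
  induction p using Polynomial.induction_on' with
  | add p q hp hq => simp only [Polynomial.eval_add]; exact hp.add hq
  | monomial m a =>
      simp only [Polynomial.eval_monomial]
      exact contDiff_const.mul (contDiff_id.pow m)

open Polynomial in
private lemma iteratedDeriv_polyeval (p : Polynomial ℝ) (k : ℕ) :
    iteratedDeriv k (fun x : ℝ => p.eval x) = fun x => (derivative^[k] p).eval x := by
  induction k with
  | zero => simp
  | succ k ih =>
      rw [iteratedDeriv_succ, ih, Function.iterate_succ_apply']
      funext x
      exact Polynomial.deriv (p := derivative^[k] p)

open Polynomial in
private lemma iterate_derivative_constant {p : Polynomial ℝ} {k : ℕ} (hp : p.natDegree ≤ k)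
    (x : ℝ) : (derivative^[k] p).eval x = (k.factorial : ℝ) * p.coeff k := by
  have h1 : (derivative^[k] p).natDegree ≤ 0 :=
    le_trans (p.natDegree_iterate_derivative k) (by omega)
  rw [Polynomial.eq_C_of_natDegree_le_zero h1, eval_C, coeff_iterate_derivative, zero_add,
    Nat.descFactorial_self, nsmul_eq_mul]

private lemma iterIoo_eq (k : ℕ) (f : ℝ → ℝ) {x : ℝ} (hx : x ∈ Set.Ioo (0:ℝ) 1) :
    iteratedDerivWithin k f (Set.Ioo 0 1) x = iteratedDeriv k f x := by
  rw [iteratedDerivWithin_eq_iteratedFDerivWithin, iteratedDeriv_eq_iteratedFDeriv,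
    iteratedFDerivWithin_of_isOpen k isOpen_Ioo hx]

private lemma iterIcc_eq (k : ℕ) (f : ℝ → ℝ) {x : ℝ} (hx : x ∈ Set.Ioo (0:ℝ) 1) :
    iteratedDerivWithin k f (Set.Icc 0 1) x = iteratedDeriv k f x := by
  have h1 : iteratedDerivWithin k f (Set.Icc 0 1 ∩ Set.Ioo 0 1) x
      = iteratedDerivWithin k f (Set.Icc 0 1) x := by
    simp only [iteratedDerivWithin_eq_iteratedFDerivWithin]
    rw [iteratedFDerivWithin_inter_open isOpen_Ioo hx]
  rw [← h1, Set.inter_eq_self_of_subset_right Set.Ioo_subset_Icc_self, iterIoo_eq k f hx]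

private lemma rolle_iter : ∀ (k : ℕ) (g : ℝ → ℝ), ContDiffOn ℝ k g (Set.Ioo 0 1) →
    ∀ y : ℕ → ℝ, (∀ i, i ≤ k → y i ∈ Set.Ioo (0:ℝ) 1) →
    (∀ i j, i < j → j ≤ k → y i < y j) →
    (∀ i, i ≤ k → g (y i) = 0) →
    ∃ ξ ∈ Set.Ioo (0:ℝ) 1, iteratedDeriv k g ξ = 0 := by
  intro k
  induction k with
  | zero =>
      intro g _ y hmem _ hz
      exact ⟨y 0, hmem 0 le_rfl, by simpa using hz 0 le_rfl⟩
  | succ k ih =>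
      intro g hg y hmem hord hz
      have hIcc : ∀ i, i ≤ k → Set.Icc (y i) (y (i+1)) ⊆ Set.Ioo (0:ℝ) 1 := by
        intro i hi t ht
        exact ⟨lt_of_lt_of_le (hmem i (hi.trans (Nat.le_succ k))).1 ht.1,
          lt_of_le_of_lt ht.2 (hmem (i+1) (Nat.succ_le_succ hi)).2⟩
      have H : ∀ i, i ≤ k → ∃ c, c ∈ Set.Ioo (y i) (y (i+1)) ∧ deriv g c = 0 := by
        intro i hi
        obtain ⟨c, hc1, hc2⟩ := exists_deriv_eq_zero
          (hord i (i+1) (Nat.lt_succ_self i) (Nat.succ_le_succ hi))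
          (hg.continuousOn.mono (hIcc i hi))
          (by rw [hz i (hi.trans (Nat.le_succ k)), hz (i+1) (Nat.succ_le_succ hi)])
        exact ⟨c, hc1, hc2⟩
      set z : ℕ → ℝ := fun i => if h : i ≤ k then (H i h).choose else 0 with hzdef
      have hzP : ∀ i, ∀ h : i ≤ k, z i ∈ Set.Ioo (y i) (y (i+1)) ∧ deriv g (z i) = 0 := by
        intro i h
        simp only [hzdef, dif_pos h]
        exact (H i h).choose_spec
      have hg' : ContDiffOn ℝ k (deriv g) (Set.Ioo 0 1) :=
        hg.deriv_of_isOpen isOpen_Ioo (by norm_cast)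
      obtain ⟨ξ, hξ, h0⟩ := ih (deriv g) hg' z
        (fun i hi => hIcc i hi ⟨le_of_lt ((hzP i hi).1).1, le_of_lt ((hzP i hi).1).2⟩)
        (fun i j hij hj => by
          have h1 : z i < y (i+1) := ((hzP i (le_trans (Nat.le_of_lt hij) hj)).1).2
          have h3 : y (i+1) ≤ y j := by
            rcases eq_or_lt_of_le (Nat.succ_le_of_lt hij) with h | h
            · rw [show i + 1 = j from h]
            · exact le_of_lt (hord (i+1) j h (hj.trans (Nat.le_succ k)))
          exact lt_of_lt_of_le h1 (h3.trans (le_of_lt ((hzP j hj).1).1)))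
        (fun i hi => (hzP i hi).2)
      exact ⟨ξ, hξ, by rw [iteratedDeriv_succ']; exact h0⟩

open Polynomial in
private lemma newton_form (g : ℝ → ℝ) (x : ℕ → ℝ) (hx : Function.Injective x) : ∀ k : ℕ,
    Lagrange.interpolate (range (k+1)) x (g ∘ x) =
      ∑ m ∈ range (k+1), C ((Lagrange.interpolate (range (m+1)) x (g ∘ x)).coeff m) *
        ∏ l ∈ range m, (X - C (x l)) := by
  intro k
  induction k with
  | zero => simp [Finset.range_one, Lagrange.interpolate_singleton]
  | succ k ih =>
      rw [Finset.sum_range_succ, ← ih]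
      set P1 := Lagrange.interpolate (range (k+1+1)) x (g ∘ x) with hP1
      set P0 := Lagrange.interpolate (range (k+1)) x (g ∘ x) with hP0
      set pr : Polynomial ℝ := ∏ l ∈ range (k+1), (X - C (x l)) with hpr
      have hmonic : pr.Monic := monic_prod_of_monic _ _ fun l _ => monic_X_sub_C _
      have hdeg : pr.natDegree = k+1 := by
        rw [hpr, natDegree_prod _ _ fun l _ => X_sub_C_ne_zero (x l)]
        simp [natDegree_X_sub_C]
      have hP1deg : P1.degree < ((k+1+1 : ℕ) : WithBot ℕ) := by
        have := Lagrange.degree_interpolate_lt (g ∘ x) (hx.injOn (s := ↑(range (k+1+1))))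
        rwa [card_range] at this
      have hP0deg : P0.degree < ((k+1 : ℕ) : WithBot ℕ) := by
        have := Lagrange.degree_interpolate_lt (g ∘ x) (hx.injOn (s := ↑(range (k+1))))
        rwa [card_range] at this
      have key : P1 - (P0 + C (P1.coeff (k+1)) * pr) = 0 := by
        apply Polynomial.eq_zero_of_degree_lt_of_eval_index_eq_zero (range (k+1)) hx.injOn
        · rw [card_range, Polynomial.degree_lt_iff_coeff_zero]
          intro m hm
          rcases eq_or_lt_of_le hm with h | h
          · have hm' : m = k + 1 := h.symm
            have e0 : P0.coeff (k+1) = 0 :=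
              coeff_eq_zero_of_degree_lt hP0deg
            have epr : pr.coeff (k+1) = 1 := by
              have := hmonic.coeff_natDegree
              rwa [hdeg] at this
            rw [hm']
            simp [coeff_sub, coeff_add, coeff_C_mul, e0, epr]
          · have hm2 : k + 1 + 1 ≤ m := h
            have e1 : P1.coeff m = 0 :=
              coeff_eq_zero_of_degree_lt (lt_of_lt_of_le hP1deg (by exact_mod_cast hm2))
            have e0 : P0.coeff m = 0 :=
              coeff_eq_zero_of_degree_lt (lt_of_lt_of_le hP0deg (by exact_mod_cast le_trans (Nat.le_succ _) hm2))
            have epr : pr.coeff m = 0 :=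
              coeff_eq_zero_of_natDegree_lt (by omega)
            simp [coeff_sub, coeff_add, coeff_C_mul, e1, e0, epr]
        · intro i hi
          have hi2 : i ∈ range (k+1+1) := by
            simp only [mem_range] at hi ⊢; omega
          have hprev : pr.eval (x i) = 0 := by
            rw [hpr, eval_prod]
            refine Finset.prod_eq_zero hi ?_
            simp
          rw [eval_sub, eval_add, eval_mul, eval_C,
            Lagrange.eval_interpolate_at_node (g ∘ x) hx.injOn hi2,
            Lagrange.eval_interpolate_at_node (g ∘ x) hx.injOn hi, hprev, mul_zero, add_zero,
            sub_self]
      exact sub_eq_zero.mp key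

open Polynomial in
private lemma dd_bound (k : ℕ) (g : ℝ → ℝ) (hg : ContDiffOn ℝ k g (Set.Ioo 0 1))
    (x : ℕ → ℝ) (hx : StrictMono x) (hmem : ∀ i, i ≤ k → x i ∈ Set.Ioo (0:ℝ) 1)
    {B : ℝ} (hB : ∀ t ∈ Set.Ioo (0:ℝ) 1, |iteratedDeriv k g t| ≤ B) :
    |(Lagrange.interpolate (range (k+1)) x (g ∘ x)).coeff k| ≤ B := by
  set P := Lagrange.interpolate (range (k+1)) x (g ∘ x) with hP
  have hPdeglt : P.degree < ((k+1 : ℕ) : WithBot ℕ) := by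
    have := Lagrange.degree_interpolate_lt (g ∘ x) (hx.injective.injOn (s := ↑(range (k+1))))
    rwa [card_range] at this
  have hPdeg : P.natDegree ≤ k := by
    by_cases h0 : P = 0
    · simp [h0]
    · have := (Polynomial.natDegree_lt_iff_degree_lt h0).mpr hPdeglt
      omega
  have hPc : ContDiffOn ℝ k (fun t : ℝ => P.eval t) (Set.Ioo 0 1) :=
    (poly_contDiff P k).contDiffOn
  set e : ℝ → ℝ := g - fun t : ℝ => P.eval t with he
  have heC : ContDiffOn ℝ k e (Set.Ioo 0 1) := hg.sub hPc
  obtain ⟨ξ, hξ, h0⟩ := rolle_iter k e heC x hmem (fun i j hij _ => hx hij)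
    (fun i hi => by
      have hnode : P.eval (x i) = g (x i) :=
        Lagrange.eval_interpolate_at_node (g ∘ x) hx.injective.injOn
          (by simp only [mem_range]; omega)
      simp [he, hnode])
  have hsub : iteratedDeriv k g ξ = iteratedDeriv k (fun t : ℝ => P.eval t) ξ := by
    have h1 : iteratedDerivWithin k e (Set.Ioo 0 1) ξ =
        iteratedDerivWithin k g (Set.Ioo 0 1) ξ -
          iteratedDerivWithin k (fun t : ℝ => P.eval t) (Set.Ioo 0 1) ξ :=
      iteratedDerivWithin_sub hξ isOpen_Ioo.uniqueDiffOn (hg ξ hξ) (hPc ξ hξ)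
    rw [iterIoo_eq k e hξ, iterIoo_eq k g hξ, iterIoo_eq k _ hξ, h0] at h1
    linarith [h1]
  have hval : iteratedDeriv k (fun t : ℝ => P.eval t) ξ = (k.factorial : ℝ) * P.coeff k := by
    rw [iteratedDeriv_polyeval P k]
    exact iterate_derivative_constant hPdeg ξ
  have hfin : (k.factorial : ℝ) * |P.coeff k| ≤ B := by
    have h2 : |iteratedDeriv k g ξ| ≤ B := hB ξ hξ
    rw [hsub, hval, abs_mul, abs_of_nonneg (by positivity : (0:ℝ) ≤ (k.factorial : ℝ))] at h2
    exact h2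
  have h3 : |P.coeff k| ≤ (k.factorial : ℝ) * |P.coeff k| := by
    have : (1:ℝ) ≤ (k.factorial : ℝ) := by exact_mod_cast Nat.one_le_iff_ne_zero.mpr k.factorial_pos.ne'
    nlinarith [abs_nonneg (P.coeff k)]
  exact h3.trans hfin

/-- Upper bound for `|det(γ'(u_1),…,γ'(u_n))|` for a `C^n` curve
(Proposition 4.1 (a)). -/
theorem det_upper_bound (n : ℕ) (hn : 1 ≤ n) (γ : ℝ → (Fin n → ℝ))
    (hγ : ContDiffOn ℝ n γ (Set.Icc 0 1)) :
    ∃ C : ℝ, ∀ u : Fin n → ℝ, StrictMono u → (∀ i, u i ∈ Set.Ioo (0 : ℝ) 1) →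
      |(Matrix.of fun (i j : Fin n) => derivWithin γ (Set.Icc 0 1) (u j) i).det|
        ≤ C * ∏ i, ∏ j ∈ Finset.Ioi i, (u j - u i) := by
  classical
  set g : Fin n → ℝ → ℝ := fun i t => derivWithin γ (Set.Icc 0 1) t i with hgdef
  have hgC : ∀ i, ContDiffOn ℝ (n-1 : ℕ) (g i) (Set.Icc 0 1) := by
    intro i
    have h1 : ContDiffOn ℝ (n-1 : ℕ) (derivWithin γ (Set.Icc 0 1)) (Set.Icc 0 1) := by
      refine hγ.derivWithin (uniqueDiffOn_Icc zero_lt_one) ?_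
      have : ((n-1 : ℕ) : WithTop ℕ∞) + 1 = ((n : ℕ) : WithTop ℕ∞) := by
        rw [show ((n-1:ℕ) : WithTop ℕ∞) + 1 = (((n-1)+1 : ℕ) : WithTop ℕ∞) by push_cast; ring]
        congr 1
        omega
      rw [this]
    exact (ContinuousLinearMap.proj i : (Fin n → ℝ) →L[ℝ] ℝ).contDiff.comp_contDiffOn h1
  have hbd : ∀ p : Fin n × Fin n, ∃ B : ℝ, ∀ t ∈ Set.Icc (0:ℝ) 1,
      |iteratedDerivWithin p.2.val (g p.1) (Set.Icc 0 1) t| ≤ B := by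
    intro p
    obtain ⟨B, hB⟩ := (isCompact_Icc (a := (0:ℝ)) (b := 1)).exists_bound_of_continuousOn
      ((hgC p.1).continuousOn_iteratedDerivWithin
        (by exact_mod_cast Nat.le_pred_of_lt p.2.isLt) (uniqueDiffOn_Icc zero_lt_one))
    exact ⟨B, fun t ht => by simpa [Real.norm_eq_abs] using hB t ht⟩
  choose B0 hB0 using hbd
  set B : ℝ := 1 + ∑ p : Fin n × Fin n, |B0 p| with hBdef
  have hBge : ∀ p : Fin n × Fin n, B0 p ≤ B := by
    intro p
    have h1 : |B0 p| ≤ ∑ q : Fin n × Fin n, |B0 q| :=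
      Finset.single_le_sum (f := fun q => |B0 q|) (fun q _ => abs_nonneg _) (mem_univ p)
    calc B0 p ≤ |B0 p| := le_abs_self _
      _ ≤ ∑ q : Fin n × Fin n, |B0 q| := h1
      _ ≤ B := by rw [hBdef]; linarith
  have hB1 : (1:ℝ) ≤ B := by
    rw [hBdef]
    have : (0:ℝ) ≤ ∑ q : Fin n × Fin n, |B0 q| := Finset.sum_nonneg fun q _ => abs_nonneg _
    linarith
  refine ⟨(n.factorial : ℝ) * B ^ n, ?_⟩
  intro u hu hmemu
  -- extend the nodes to all of ℕ
  set x : ℕ → ℝ := fun j => if h : j < n then u ⟨j, h⟩ else (j : ℝ) + 2 with hxdef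
  have hxu : ∀ j : Fin n, x j.val = u j := by
    intro j
    simp only [hxdef, dif_pos j.isLt]
  have hxmem : ∀ l, l < n → x l ∈ Set.Ioo (0:ℝ) 1 := by
    intro l hl
    simp only [hxdef, dif_pos hl]
    exact hmemu _
  have hxmono : StrictMono x := by
    intro a b hab
    by_cases ha : a < n
    · by_cases hb : b < n
      · simp only [hxdef, dif_pos ha, dif_pos hb]
        exact hu (show (⟨a,ha⟩ : Fin n) < ⟨b,hb⟩ from hab)
      · have h1 : x a < 1 := (hxmem a ha).2
        have h2 : (1:ℝ) ≤ (b:ℝ) + 2 := by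
          have : (0:ℝ) ≤ (b:ℝ) := Nat.cast_nonneg b
          linarith
        calc x a < 1 := h1
          _ ≤ (b:ℝ) + 2 := h2
          _ = x b := by simp [hxdef, dif_neg hb]
    · have hb : ¬ b < n := fun hb' => ha (lt_trans hab hb')
      simp only [hxdef, dif_neg ha, dif_neg hb]
      have : (a:ℝ) < (b:ℝ) := by exact_mod_cast hab
      linarith
  set dd : Fin n → ℕ → ℝ :=
    fun i m => (Lagrange.interpolate (range (m+1)) x (g i ∘ x)).coeff m with hdd
  set D : Matrix (Fin n) (Fin n) ℝ := Matrix.of fun i m => dd i m.val with hD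
  set W : Matrix (Fin n) (Fin n) ℝ :=
    Matrix.of fun m j => ∏ l ∈ range m.val, (u j - x l) with hW
  have hM : (Matrix.of fun (i j : Fin n) => derivWithin γ (Set.Icc 0 1) (u j) i) = D * W := by
    ext i j
    rw [Matrix.mul_apply]
    have hnew := newton_form (g i) x hxmono.injective (n-1)
    have hn' : n - 1 + 1 = n := Nat.succ_pred_eq_of_pos hn
    rw [hn'] at hnew
    have heval : g i (x j.val) =
        ∑ m ∈ range n, dd i m * ∏ l ∈ range m, (x j.val - x l) := by
      have h1 : Polynomial.eval (x j.val) (Lagrange.interpolate (range n) x (g i ∘ x))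
          = (g i ∘ x) j.val :=
        Lagrange.eval_interpolate_at_node (g i ∘ x) hxmono.injective.injOn
          (by simp [j.isLt])
      rw [show g i (x j.val) = (g i ∘ x) j.val from rfl, ← h1, hnew]
      rw [Polynomial.eval_finset_sum]
      refine Finset.sum_congr rfl fun m _ => ?_
      rw [Polynomial.eval_mul, Polynomial.eval_C, Polynomial.eval_prod]
      simp [hdd]
    have hLHS : (Matrix.of fun (i j : Fin n) => derivWithin γ (Set.Icc 0 1) (u j) i) i j
        = g i (x j.val) := by
      rw [hxu j]
      rfl
    rw [hLHS, heval,
      ← Fin.sum_univ_eq_sum_range (fun m => dd i m * ∏ l ∈ range m, (x j.val - x l)) n]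
    refine Finset.sum_congr rfl fun m _ => ?_
    rw [hD, hW]
    simp only [Matrix.of_apply]
    rw [hxu j]
  have hWtri : W.BlockTriangular id := by
    intro m j hmj
    simp only [hW, Matrix.of_apply]
    refine Finset.prod_eq_zero (i := j.val) (by simpa [mem_range] using hmj) ?_
    rw [hxu j, sub_self]
  have hWdiag : ∀ m : Fin n, W m m = ∏ l ∈ Finset.Iio m, (u m - u l) := by
    intro m
    simp only [hW, Matrix.of_apply]
    rw [show (range m.val) = (Finset.Iio m).map Fin.valEmbedding by
      rw [Fin.map_valEmbedding_Iio, Nat.Iio_eq_range]]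
    rw [Finset.prod_map]
    refine Finset.prod_congr rfl fun l _ => ?_
    rw [show (Fin.valEmbedding l : ℕ) = l.val from rfl, hxu l]
  have hWdet : W.det = ∏ i, ∏ j ∈ Finset.Ioi i, (u j - u i) := by
    rw [Matrix.det_of_upperTriangular hWtri]
    rw [Finset.prod_congr rfl fun m _ => hWdiag m]
    exact Finset.prod_comm' (by intro a b; simp [and_comm])
  have hprodpos : (0:ℝ) ≤ ∏ i, ∏ j ∈ Finset.Ioi i, (u j - u i) := by
    refine Finset.prod_nonneg fun i _ => Finset.prod_nonneg fun j hj => ?_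
    have : i < j := by simpa using hj
    have := hu this
    linarith
  have hDle : ∀ i m : Fin n, |D i m| ≤ B := by
    intro i m
    have hmlt := m.isLt
    have hk : m.val ≤ n - 1 := by omega
    have hgi : ContDiffOn ℝ m.val (g i) (Set.Ioo 0 1) :=
      ((hgC i).of_le (by exact_mod_cast hk)).mono Set.Ioo_subset_Icc_self
    have hBB : ∀ t ∈ Set.Ioo (0:ℝ) 1, |iteratedDeriv m.val (g i) t| ≤ B := by
      intro t ht
      rw [← iterIcc_eq m.val (g i) ht]
      exact le_trans (hB0 (i, m) t (Set.Ioo_subset_Icc_self ht)) (hBge (i, m))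
    exact dd_bound m.val (g i) hgi x hxmono (fun l hl => hxmem l (by omega)) hBB
  have hDdet : |D.det| ≤ (n.factorial : ℝ) * B ^ n := by
    rw [Matrix.det_apply]
    refine le_trans (Finset.abs_sum_le_sum_abs _ _) ?_
    have hterm : ∀ σ : Equiv.Perm (Fin n),
        |Equiv.Perm.sign σ • ∏ i, D (σ i) i| ≤ B ^ n := by
      intro σ
      have h1 : |Equiv.Perm.sign σ • ∏ i, D (σ i) i| = |∏ i, D (σ i) i| := by
        rcases Int.units_eq_one_or (Equiv.Perm.sign σ) with h | h <;>
          simp [h, abs_neg]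
      rw [h1, Finset.abs_prod]
      calc ∏ i, |D (σ i) i| ≤ ∏ _i : Fin n, B :=
            Finset.prod_le_prod (fun _ _ => abs_nonneg _) (fun i _ => hDle _ _)
        _ = B ^ n := by simp
    refine le_trans (Finset.sum_le_sum fun σ _ => hterm σ) ?_
    rw [Finset.sum_const, Finset.card_univ, Fintype.card_perm]
    simp [nsmul_eq_mul]
  calc |(Matrix.of fun (i j : Fin n) => derivWithin γ (Set.Icc 0 1) (u j) i).det|
      = |D.det| * (∏ i, ∏ j ∈ Finset.Ioi i, (u j - u i)) := by
        rw [hM, Matrix.det_mul, abs_mul, hWdet, abs_of_nonneg hprodpos]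
    _ ≤ ((n.factorial : ℝ) * B ^ n) * ∏ i, ∏ j ∈ Finset.Ioi i, (u j - u i) :=
        mul_le_mul_of_nonneg_right hDdet hprodpos
end
end

section
/- Let γ: [0,1] → ℝ^n be a non-degenerate C^n curve. Then there exist a constant C' = C'(γ,n) > 0 and δ_0 = δ_0(γ,n) > 0 such that for every choice of points 0 < u_1 < u_2 < ... < u_n < 1 with u_n − u_1 < δ_0, one has |det(γ'(u_1), γ'(u_2), ..., γ'(u_n))| ≥ C'·∏_{1 ≤ i < j ≤ n} (u_j − u_i), where the determinant is of the n×n matrix whose columns are γ'(u_1), ..., γ'(u_n). -/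
/-!
Let `L` be the lower-triangular matrix whose `k`-th row holds the weights of the divided
difference at the nodes `u₀, …, u_k`. Then `det L = ∏_{i<j} (u_j - u_i)⁻¹`, and the `k`-th column of
`(γ'(u₀), …, γ'(u_{n-1})) * Lᵀ` is the divided difference `γ'[u₀, …, u_k]`. By the mean value
theorem for divided differences (iterated Rolle applied to `γ_i'` minus its interpolating
polynomial), its `i`-th entry is `γ_i^{(k+1)}(ξ_{ik}) / k!` with `ξ_{ik} ∈ [u₀, u_{n-1}]`. So
`det(γ'(u_j))` is `∏_{i<j} (u_j - u_i) · ∏_k (k!)⁻¹` times the non-degeneracy determinant with its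
entries evaluated at the points `ξ_{ik}`; by uniform continuity this last determinant stays away
from zero once all `ξ_{ik}` lie in a short interval.
-/

open Finset

noncomputable section

/-- Non-degeneracy of a `C^n` curve `γ : [0,1] → ℝ^n`:
`det(γ'(t), γ''(t), …, γ^{(n)}(t)) ≠ 0` for every `t ∈ [0,1]`. -/
def NonDegenerate (n : ℕ) (γ : ℝ → (Fin n → ℝ)) : Prop :=
  ∀ t ∈ Set.Icc (0 : ℝ) 1,
    (Matrix.of fun (i j : Fin n) =>
      iteratedDerivWithin ((j : ℕ) + 1) γ (Set.Icc 0 1) t i).det ≠ 0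

open Polynomial
open scoped Matrix

theorem Polynomial.iteratedDeriv_eval {𝕜 : Type*} [NontriviallyNormedField 𝕜] (p : 𝕜[X])
    (k : ℕ) : iteratedDeriv k (fun x => p.eval x) = fun x => (derivative^[k] p).eval x := by
  induction k generalizing p with
  | zero => rfl
  | succ k ih =>
    rw [iteratedDeriv_succ', show deriv (fun x => p.eval x) = fun x => p.derivative.eval x by
      ext; exact p.deriv, ih, Function.iterate_succ_apply]

theorem exists_iteratedDerivWithin_eq_zero {s : Set ℝ} (hs : UniqueDiffOn ℝ s) {a b : ℝ}
    (hab : Set.Icc a b ⊆ s) {k : ℕ} {f : ℝ → ℝ} (hf : ContDiffOn ℝ k f s) {u : Fin (k + 1) → ℝ}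
    (hu : StrictMono u) (huab : ∀ i, u i ∈ Set.Icc a b) (hfu : ∀ i, f (u i) = 0) :
    ∃ ξ ∈ Set.Icc a b, iteratedDerivWithin k f s ξ = 0 := by
  induction k generalizing f with
  | zero => exact ⟨u 0, huab 0, by simpa using hfu 0⟩
  | succ k ih =>
    have hsub (i : Fin (k + 1)) : Set.Icc (u i.castSucc) (u i.succ) ⊆ Set.Icc a b :=
      Set.Icc_subset_Icc (huab _).1 (huab _).2
    have rolle (i : Fin (k + 1)) : ∃ c ∈ Set.Ioo (u i.castSucc) (u i.succ), deriv f c = 0 :=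
      exists_deriv_eq_zero (hu i.castSucc_lt_succ)
        (hf.continuousOn.mono ((hsub i).trans hab)) (by rw [hfu, hfu])
    choose v hv hfv using rolle
    have hv_mono : StrictMono v := Fin.strictMono_iff_lt_succ.2 fun i =>
      (hv _).2.trans (Fin.succ_castSucc i ▸ (hv _).1)
    have hv_nhds (i : Fin (k + 1)) : s ∈ nhds (v i) :=
      Filter.mem_of_superset
        (Icc_mem_nhds ((huab _).1.trans_lt (hv i).1) ((hv i).2.trans_le (huab _).2)) hab
    obtain ⟨ξ, hξ, hξ0⟩ := ih (hf.derivWithin hs (by norm_cast)) hv_mono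
      (fun i => hsub i (Set.Ioo_subset_Icc_self (hv i)))
      (fun i => by rw [derivWithin_of_mem_nhds (hv_nhds i), hfv])
    exact ⟨ξ, hξ, by rwa [iteratedDerivWithin_succ']⟩

def dividedDifference {F ι : Type*} [Field F] [DecidableEq ι] (s : Finset ι) (v r : ι → F) : F :=
  ∑ i ∈ s, r i / ∏ j ∈ s.erase i, (v i - v j)

theorem Lagrange.eval_iterate_derivative_interpolate {F ι : Type*} [Field F] [DecidableEq ι]
    {s : Finset ι} {v : ι → F} (hvs : Set.InjOn v s) (hs : s.Nonempty) (r : ι → F) (x : F) :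
    (derivative^[#s - 1] (Lagrange.interpolate s v r)).eval x
      = (#s - 1).factorial * dividedDifference s v r := by
  have hk : #s - 1 < #s := Nat.sub_lt hs.card_pos one_pos
  rw [Lagrange.eval_iterate_derivative_eq_sum hvs (Lagrange.degree_interpolate_lt r hvs) hk,
    Nat.sub_add_cancel hs.card_pos, Nat.sub_self, dividedDifference]
  congr 1
  refine sum_congr rfl fun i hi => ?_
  rw [Lagrange.eval_interpolate_at_node r hvs hi]
  simp

theorem exists_factorial_mul_dividedDifference_eq_iteratedDerivWithin {ι : Type*} [DecidableEq ι]
    {s : Set ℝ} (hs : UniqueDiffOn ℝ s) {a b : ℝ} (hab : Set.Icc a b ⊆ s) {t : Finset ι}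
    (ht : t.Nonempty) {v : ι → ℝ} (hv : Set.InjOn v t) (hvab : ∀ i ∈ t, v i ∈ Set.Icc a b)
    {f : ℝ → ℝ} (hf : ContDiffOn ℝ (#t - 1 : ℕ) f s) :
    ∃ ξ ∈ Set.Icc a b,
      (#t - 1).factorial * dividedDifference t v (f ∘ v) = iteratedDerivWithin (#t - 1) f s ξ := by
  -- `f - p` vanishes at the `#t` nodes, and the `(#t - 1)`-st derivative of the interpolating
  -- polynomial `p` is the constant `(#t - 1)! * dividedDifference t v (f ∘ v)`.
  set k := #t - 1
  set p := Lagrange.interpolate t v (f ∘ v)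
  have hp : ContDiff ℝ k (fun x => p.eval x) := by simpa using p.contDiff_aeval (𝕜 := ℝ) k
  have hcard : #(t.image v) = k + 1 := by
    have := ht.card_pos
    rw [card_image_of_injOn hv]
    omega
  set w := (t.image v).orderEmbOfFin hcard
  have hw (m : Fin (k + 1)) : ∃ i ∈ t, v i = w m :=
    mem_image.1 ((t.image v).orderEmbOfFin_mem hcard m)
  obtain ⟨ξ, hξ, hξ0⟩ := exists_iteratedDerivWithin_eq_zero (f := f - fun x => p.eval x) hs hab
    (hf.sub hp.contDiffOn) w.strictMono
    (fun m => by obtain ⟨i, hi, hiw⟩ := hw m; exact hiw ▸ hvab i hi)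
    (fun m => by
      obtain ⟨i, hi, hiw⟩ := hw m
      rw [Pi.sub_apply, ← hiw, Lagrange.eval_interpolate_at_node _ hv hi, Function.comp_apply,
        sub_self])
  refine ⟨ξ, hξ, ?_⟩
  have hξs := hab hξ
  rw [iteratedDerivWithin_sub hξs hs (hf ξ hξs) hp.contDiffWithinAt, sub_eq_zero,
    iteratedDerivWithin_eq_iteratedDeriv hs hp.contDiffAt hξs, Polynomial.iteratedDeriv_eval] at hξ0
  rw [hξ0]
  exact (Lagrange.eval_iterate_derivative_interpolate hv ht _ ξ).symm

theorem iteratedDerivWithin_apply {𝕜 ι F : Type*} [NontriviallyNormedField 𝕜] [Fintype ι]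
    [NormedAddCommGroup F] [NormedSpace 𝕜 F] {f : 𝕜 → ι → F} {s : Set 𝕜} {x : 𝕜} {k : ℕ}
    (hf : ContDiffWithinAt 𝕜 k f s x) (hs : UniqueDiffOn 𝕜 s) (hx : x ∈ s) (i : ι) :
    iteratedDerivWithin k (fun t => f t i) s x = iteratedDerivWithin k f s x i := by
  have h := (ContinuousLinearMap.proj (R := 𝕜) (φ := fun _ : ι => F) i)
    |>.iteratedFDerivWithin_comp_left hf hs hx le_rfl
  simp only [iteratedDerivWithin_eq_iteratedFDerivWithin]
  exact congrArg (fun g => g fun _ => (1 : 𝕜)) h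

def dividedDifferenceMatrix {F : Type*} [Field F] {n : ℕ} (u : Fin n → F) :
    Matrix (Fin n) (Fin n) F :=
  Matrix.of fun k l => if l ≤ k then (∏ j ∈ (Iic k).erase l, (u l - u j))⁻¹ else 0

theorem mul_dividedDifferenceMatrix_transpose_apply {F m : Type*} [Field F] {n : ℕ}
    (u : Fin n → F) (A : Matrix m (Fin n) F) (i : m) (k : Fin n) :
    (A * (dividedDifferenceMatrix u)ᵀ) i k = dividedDifference (Iic k) u (A i) := by
  simp only [Matrix.mul_apply, Matrix.transpose_apply, dividedDifferenceMatrix, Matrix.of_apply,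
    mul_ite, mul_zero, dividedDifference, div_eq_mul_inv]
  rw [← sum_filter]
  congr 1
  ext l
  simp

theorem det_dividedDifferenceMatrix {F : Type*} [Field F] {n : ℕ} (u : Fin n → F) :
    (dividedDifferenceMatrix u).det = (∏ i, ∏ j ∈ Ioi i, (u j - u i))⁻¹ := by
  have hlower : (dividedDifferenceMatrix u).BlockTriangular OrderDual.toDual :=
    fun k l (hkl : k < l) => if_neg hkl.not_ge
  rw [Matrix.det_of_isLowerTriangular _ hlower,
    prod_comm' (t' := univ) (s' := fun j => Iio j) (by simp), ← prod_inv_distrib]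
  refine prod_congr rfl fun k _ => ?_
  simp [dividedDifferenceMatrix, Iic_erase]

theorem exists_pos_le_abs_det_of_forall_dist_lt {X m : Type*} [MetricSpace X] [Fintype m]
    [DecidableEq m] {K : Set X} (hK : IsCompact K) {A : X → Matrix m m ℝ}
    (hA : ContinuousOn A K) (hdet : ∀ x ∈ K, (A x).det ≠ 0) :
    ∃ c > 0, ∃ δ > 0, ∀ (ξ : m → m → X), ∀ x ∈ K, (∀ i j, ξ i j ∈ K) →
      (∀ i j, dist (ξ i j) x < δ) → c ≤ |(Matrix.of fun i j => A (ξ i j) i j).det| := by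
  obtain ⟨c, hc, hcK⟩ := hK.exists_forall_le' (f := fun x => |(A x).det|)
    (continuous_abs.comp_continuousOn (continuous_id.matrix_det.comp_continuousOn hA))
    fun x hx => abs_pos.2 (hdet x hx)
  set Φ : (m → m → X) → ℝ := fun ξ => (Matrix.of fun i j => A (ξ i j) i j).det
  set cube := Set.univ.pi fun _ : m => Set.univ.pi fun _ : m => K
  have hΦ : ContinuousOn Φ cube := by
    refine continuous_id.matrix_det.comp_continuousOn (continuousOn_pi.2 fun i =>
      continuousOn_pi.2 fun j => ?_)
    have hij : Continuous fun ξ : m → m → X => ξ i j :=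
      (continuous_apply j).comp (continuous_apply i)
    exact ((continuous_apply j).comp (continuous_apply i)).comp_continuousOn
      (hA.comp hij.continuousOn fun ξ (hξ : ξ ∈ cube) => hξ i trivial j trivial)
  obtain ⟨δ, hδ, hΦδ⟩ := Metric.uniformContinuousOn_iff.1
    ((isCompact_univ_pi fun _ => isCompact_univ_pi fun _ => hK).uniformContinuousOn_of_continuous
      hΦ)
    (c / 2) (half_pos hc)
  refine ⟨c / 2, half_pos hc, δ, hδ, fun ξ x hx hξK hξx => ?_⟩
  have hclose : |Φ ξ - (A x).det| < c / 2 :=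
    hΦδ ξ (fun i _ j _ => hξK i j) (fun _ _ => x) (fun _ _ _ _ => hx)
      ((dist_pi_lt_iff hδ).2 fun i => (dist_pi_lt_iff hδ).2 fun j => hξx i j)
  show c / 2 ≤ |Φ ξ|
  linarith [(hcK x hx : c ≤ |(A x).det|), abs_sub_abs_le_abs_sub (A x).det (Φ ξ),
    abs_sub_comm (A x).det (Φ ξ)]

theorem exists_factorial_mul_dividedDifference_derivWithin_apply_eq {ι : Type*} [Fintype ι]
    {m : ℕ} {S : Set ℝ} (hS : UniqueDiffOn ℝ S) {a b : ℝ} (hab : Set.Icc a b ⊆ S)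
    {γ : ℝ → ι → ℝ} (hγ : ContDiffOn ℝ m γ S) {u : Fin m → ℝ} (hu : StrictMono u)
    (huab : ∀ l, u l ∈ Set.Icc a b) (i : ι) (k : Fin m) :
    ∃ ξ ∈ Set.Icc a b, (k : ℕ).factorial *
      dividedDifference (Iic k) u (fun l => derivWithin γ S (u l) i)
        = iteratedDerivWithin ((k : ℕ) + 1) γ S ξ i := by
  have hm := k.pos
  have hγ' : ContDiffOn ℝ (m - 1 : ℕ) (derivWithin γ S) S :=
    hγ.derivWithin hS (by norm_cast; omega)
  have hcard : #(Iic k) - 1 = k := by simp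
  have hf : ContDiffOn ℝ (#(Iic k) - 1 : ℕ) (fun t => derivWithin γ S t i) S := by
    rw [hcard]
    have := (ContinuousLinearMap.proj (R := ℝ) (φ := fun _ : ι => ℝ) i).contDiff
      |>.comp_contDiffOn hγ'
    exact this.of_le (by norm_cast; omega)
  obtain ⟨ξ, hξ, hξk⟩ := exists_factorial_mul_dividedDifference_eq_iteratedDerivWithin hS hab
    nonempty_Iic hu.injective.injOn (fun l _ => huab l) hf
  rw [hcard] at hξk
  refine ⟨ξ, hξ, hξk.trans ?_⟩
  rw [iteratedDerivWithin_apply ((hγ' _ (hab hξ)).of_le (by norm_cast; omega)) hS (hab hξ),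
    ← iteratedDerivWithin_succ']

theorem prod_prod_Ioi_sub_pos {n : ℕ} {u : Fin n → ℝ} (hu : StrictMono u) :
    0 < ∏ i, ∏ j ∈ Ioi i, (u j - u i) :=
  prod_pos fun _ _ => prod_pos fun _ hj => sub_pos.2 (hu (mem_Ioi.1 hj))

theorem exists_det_derivWithin_eq {n : ℕ} {S : Set ℝ} (hS : UniqueDiffOn ℝ S) {a b : ℝ}
    (hab : Set.Icc a b ⊆ S) {γ : ℝ → Fin n → ℝ} (hγ : ContDiffOn ℝ n γ S) {u : Fin n → ℝ}
    (hu : StrictMono u) (huab : ∀ l, u l ∈ Set.Icc a b) :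
    ∃ ξ : Fin n → Fin n → ℝ, (∀ i k, ξ i k ∈ Set.Icc a b) ∧
      (Matrix.of fun i j => derivWithin γ S (u j) i).det =
        (∏ i, ∏ j ∈ Ioi i, (u j - u i)) * (∏ k : Fin n, ((k : ℕ).factorial : ℝ)⁻¹) *
          (Matrix.of fun (i k : Fin n) => iteratedDerivWithin ((k : ℕ) + 1) γ S (ξ i k) i).det := by
  choose ξ hξ hξγ using
    exists_factorial_mul_dividedDifference_derivWithin_apply_eq hS hab hγ hu huab
  refine ⟨ξ, hξ, ?_⟩
  have hfactor : (Matrix.of fun i j => derivWithin γ S (u j) i) * (dividedDifferenceMatrix u)ᵀ =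
      (Matrix.of fun (i k : Fin n) => iteratedDerivWithin ((k : ℕ) + 1) γ S (ξ i k) i) *
        Matrix.diagonal fun k : Fin n => ((k : ℕ).factorial : ℝ)⁻¹ := by
    ext i k
    rw [mul_dividedDifferenceMatrix_transpose_apply, Matrix.mul_diagonal, Matrix.of_apply, ← hξγ,
      mul_comm, inv_mul_cancel_left₀ (Nat.cast_ne_zero.2 (Nat.factorial_ne_zero _))]
    rfl
  have hdet := congrArg Matrix.det hfactor
  rw [Matrix.det_mul, Matrix.det_transpose, det_dividedDifferenceMatrix, Matrix.det_mul,
    Matrix.det_diagonal, mul_inv_eq_iff_eq_mul₀ (prod_prod_Ioi_sub_pos hu).ne'] at hdet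
  rw [hdet]
  ring

/-- Lower bound for `|det(γ'(u_1),…,γ'(u_n))|` for a non-degenerate `C^n`
curve, for points contained in an interval of length `< δ₀`
(Proposition 4.1 (b)). -/
theorem det_lower_bound (n : ℕ) (hn : 1 ≤ n) (γ : ℝ → (Fin n → ℝ))
    (hγ : ContDiffOn ℝ n γ (Set.Icc 0 1)) (hnd : NonDegenerate n γ) :
    ∃ C' δ₀ : ℝ, 0 < C' ∧ 0 < δ₀ ∧
      ∀ u : Fin n → ℝ, StrictMono u → (∀ i, u i ∈ Set.Ioo (0 : ℝ) 1) →
        u ⟨n - 1, by omega⟩ - u ⟨0, by omega⟩ < δ₀ →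
        C' * ∏ i, ∏ j ∈ Finset.Ioi i, (u j - u i)
          ≤ |(Matrix.of fun (i j : Fin n) => derivWithin γ (Set.Icc 0 1) (u j) i).det| := by
  set S := Set.Icc (0 : ℝ) 1
  set A : ℝ → Matrix (Fin n) (Fin n) ℝ :=
    fun t => Matrix.of fun i j => iteratedDerivWithin ((j : ℕ) + 1) γ S t i
  have hA : ContinuousOn A S := continuousOn_pi.2 fun i => continuousOn_pi.2 fun j =>
    (continuous_apply i).comp_continuousOn <|
      hγ.continuousOn_iteratedDerivWithin (m := (j : ℕ) + 1) (by exact_mod_cast j.isLt)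
        (uniqueDiffOn_Icc one_pos)
  obtain ⟨c, hc, δ, hδ, hcδ⟩ := exists_pos_le_abs_det_of_forall_dist_lt isCompact_Icc hA hnd
  have hQ : 0 < ∏ k : Fin n, ((k : ℕ).factorial : ℝ)⁻¹ := by positivity
  refine ⟨(∏ k : Fin n, ((k : ℕ).factorial : ℝ)⁻¹) * c, δ, mul_pos hQ hc, hδ,
    fun u hu hu01 hspread => ?_⟩
  set a := u ⟨0, by omega⟩
  set b := u ⟨n - 1, by omega⟩
  have hab : Set.Icc a b ⊆ S := Set.Icc_subset_Icc (hu01 _).1.le (hu01 _).2.le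
  have huab (l : Fin n) : u l ∈ Set.Icc a b :=
    ⟨hu.monotone (Fin.le_iff_val_le_val.2 (Nat.zero_le _)),
      hu.monotone (Fin.le_iff_val_le_val.2 (by simp only; omega))⟩
  obtain ⟨ξ, hξ, hdet⟩ := exists_det_derivWithin_eq (uniqueDiffOn_Icc one_pos) hab hγ hu huab
  have hξa (i j : Fin n) : dist (ξ i j) a < δ := by
    rw [Real.dist_eq, abs_sub_lt_iff]
    constructor <;> linarith [(hξ i j).1, (hξ i j).2]
  have hbound : c ≤ |(Matrix.of fun (i k : Fin n) =>
      iteratedDerivWithin ((k : ℕ) + 1) γ S (ξ i k) i).det| :=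
    hcδ ξ a (hab (huab _)) (fun i j => hab (hξ i j)) hξa
  have hP := prod_prod_Ioi_sub_pos hu
  rw [hdet, abs_mul, abs_mul, abs_of_pos hP, abs_of_pos hQ]
  linarith [mul_le_mul_of_nonneg_left hbound (mul_pos hP hQ).le]
end
end

section
/- Let n ≥ 1 and let (x_1, ..., x_n) and (y_1, ..., y_n) be two lists of real numbers. Suppose that ∑_{i=1}^n χ_{[x_i, y_i)}(t) = 0 for every t ∈ ℝ. Then (x_1, ..., x_n) is a permutation of (y_1, ..., y_n). -/
open Finset

noncomputable section

/-- The signed indicator `χ_{[x,y)}`: equal to `+1` if `x ≤ t < y`, `-1` if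
`y ≤ t < x`, and `0` otherwise. -/
def chiInt (x y t : ℝ) : ℝ :=
  if x ≤ t ∧ t < y then 1 else if y ≤ t ∧ t < x then -1 else 0

lemma chiInt_eq (x y t : ℝ) :
    chiInt x y t = (if x ≤ t then (1:ℝ) else 0) - (if y ≤ t then (1:ℝ) else 0) := by
  unfold chiInt
  by_cases h1 : x ≤ t <;> by_cases h2 : y ≤ t
  · simp [h1, h2, not_lt.mpr h1, not_lt.mpr h2]
  · simp [h1, h2, not_le.mp h2, not_lt.mpr h1]
  · simp [h1, h2, not_le.mp h1, not_lt.mpr h2]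
  · simp only [h1, h2, false_and, and_false, if_false, sub_self]

lemma count_ofFn_eq {n : ℕ} (f : Fin n → ℝ) (a : ℝ) :
    (List.ofFn f).count a = (univ.filter fun i => f i = a).card := by
  rw [← Multiset.coe_count, ← Fin.univ_val_map, Multiset.count_map]
  simp only [Finset.card, Finset.filter_val]
  congr 1
  apply Multiset.filter_congr
  intro i _
  exact eq_comm

/-- Lemma 5.2: if `∑_{i=1}^n χ_{[x_i, y_i)}(t) = 0` for all `t ∈ ℝ`, then
`(x_1,…,x_n)` is a permutation of `(y_1,…,y_n)`. -/
theorem chi_sum_zero_implies_perm (n : ℕ) (hn : 1 ≤ n) (x y : Fin n → ℝ)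
    (h : ∀ t : ℝ, ∑ i, chiInt (x i) (y i) t = 0) :
    ∃ σ : Equiv.Perm (Fin n), ∀ i, x (σ i) = y i := by
  -- Step 1: for every t, the number of i with x i ≤ t equals that with y i ≤ t.
  have hcard : ∀ t : ℝ, (univ.filter fun i => x i ≤ t).card
      = (univ.filter fun i => y i ≤ t).card := by
    intro t
    have h0 := h t
    simp_rw [chiInt_eq, Finset.sum_sub_distrib, Finset.sum_boole, sub_eq_zero] at h0
    exact_mod_cast h0
  -- Step 2: for every a, the number of i with x i = a equals that with y i = a.
  have hcount : ∀ a : ℝ, (univ.filter fun i => x i = a).card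
      = (univ.filter fun i => y i = a).card := by
    intro a
    -- choose t < a with no value of x or y in (t, a)
    obtain ⟨t, ht, htx, hty⟩ : ∃ t : ℝ, t < a ∧ (∀ i, x i ≤ t ↔ x i < a)
        ∧ (∀ i, y i ≤ t ↔ y i < a) := by
      set S : Finset ℝ :=
        ((image x univ ∪ image y univ).filter (· < a)) ∪ {a - 1} with hS
      have hne : S.Nonempty := ⟨a - 1, by simp [hS]⟩
      have hmax : S.max' hne < a := by
        rw [Finset.max'_lt_iff]
        intro b hb
        rcases Finset.mem_union.mp hb with h' | h'
        · exact (Finset.mem_filter.mp h').2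
        · simp only [Finset.mem_singleton] at h'; rw [h']; linarith
      refine ⟨S.max' hne, hmax, fun i => ⟨fun hle => lt_of_le_of_lt hle hmax,
        fun hlt => S.le_max' _ (Finset.mem_union_left _ (Finset.mem_filter.mpr
          ⟨Finset.mem_union_left _ (Finset.mem_image_of_mem x (mem_univ i)), hlt⟩))⟩,
        fun i => ⟨fun hle => lt_of_le_of_lt hle hmax,
        fun hlt => S.le_max' _ (Finset.mem_union_left _ (Finset.mem_filter.mpr
          ⟨Finset.mem_union_right _ (Finset.mem_image_of_mem y (mem_univ i)), hlt⟩))⟩⟩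
    have split : ∀ f : Fin n → ℝ, (∀ i, f i ≤ t ↔ f i < a) →
        (univ.filter fun i => f i ≤ a).card
          = (univ.filter fun i => f i ≤ t).card + (univ.filter fun i => f i = a).card := by
      intro f hf
      rw [← Finset.card_union_of_disjoint]
      · congr 1
        ext i
        simp only [Finset.mem_filter, Finset.mem_union, mem_univ, true_and]
        constructor
        · intro hle
          rcases lt_or_eq_of_le hle with h' | h'
          · exact Or.inl ((hf i).mpr h')
          · exact Or.inr h'
        · rintro (h' | h')
          · exact le_trans h' (le_of_lt ht)
          · exact le_of_eq h'
      · rw [Finset.disjoint_filter]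
        intro i _ hle heq
        have := (hf i).mp hle
        rw [heq] at this
        exact absurd this (lt_irrefl a)
    have hx := split x htx
    have hy := split y hty
    have h1 := hcard a
    have h2 := hcard t
    omega
  -- Step 3: ofFn x ~ ofFn y
  have hperm : (List.ofFn x).Perm (List.ofFn y) := by
    rw [List.perm_iff_count]
    intro a
    rw [count_ofFn_eq x a, count_ofFn_eq y a, hcount a]
  -- Step 4: produce the permutation via sorting.
  have hsx := Tuple.monotone_sort x
  have hsy := Tuple.monotone_sort y
  have hxy : x ∘ Tuple.sort x = y ∘ Tuple.sort y := by
    apply List.ofFn_injective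
    exact (fun hp h1 h2 => List.Perm.eq_of_pairwise' h1 h2 hp)
      (((Equiv.Perm.ofFn_comp_perm _ x).trans hperm).trans
        (Equiv.Perm.ofFn_comp_perm _ y).symm)
      (List.sortedLE_ofFn_iff.mpr hsx).pairwise
      (List.sortedLE_ofFn_iff.mpr hsy).pairwise
  refine ⟨(Tuple.sort y).symm.trans (Tuple.sort x), fun i => ?_⟩
  have := congrFun hxy ((Tuple.sort y).symm i)
  simpa using this
end
end
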